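/- arXiv:1509.05494 — 10 statements merged into one kernel-verified Lean document; each statement's English description precedes it below -/
import Mathlib

section
/- Let G = (V, 𝓔) be a hypergraph with activity parameter λ > 0, let v ∈ V be a vertex of degree d whose incident hyperedges are e₁, …, e_d with e_i = {v} ∪ {v_{i1}, …, v_{i w_i}}. Let G' be the hypergraph obtained from G by replacing v with d copies v₁, …, v_d, where each e_i is replaced by e_i − v + v_i. For i ∈ [d] and j ∈ [w_i] define G_{ij} := G' − {v_k : i ≤ k ≤ d} − {e_k : 1 ≤ k ≤ i} − {v_{ik} : 1 ≤ k < j} (deleting a vertex removes it from every hyperedge; deleting a hyperedge removes it from the edge set). Set R_v = Pr_G[v ∈ I]/Pr_G[v ∉ I] and R_{ij} = Pr_{G_{ij}}[v_{ij} ∈ I]/Pr_{G_{ij}}[v_{ij} ∉ I]. Then R_v = λ · ∏_{i=1}^d ( 1 − ∏_{j=1}^{w_i} R_{ij}/(1 + R_{ij}) ). -/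
/-
Conditioning on `v` gives `R_v = λ Z(G - v) / Z(G \ v)`, where `G \ v` deletes `v` together with
its edges. For `0 ≤ s ≤ d` let `H_s` be `G - v` keeping, among the shrunk edges `e_k - v`, only
those with `k > s`; then `H_0 = G - v`, `H_d = G \ v`, and `R_v / λ = ∏ᵢ Z(H_{i-1}) / Z(H_i)`.
Up to the isolated copies `v_1, …, v_{i-1}` (a common factor `(1 + λ)^(i-1)`), `G_{i1}` is `H_i`,
and `H_{i-1}` is `H_i` plus the edge `e_i - v`. The independent sets of `H_i` violating that edge
are those containing all of `v_{i1}, …, v_{iw_i}`; pinning these vertices one at a time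
contributes the factors `Pr_{G_{ij}}[v_{ij} ∈ I] = R_{ij} / (1 + R_{ij})`, so
`Z(H_{i-1}) / Z(H_i) = 1 - ∏ⱼ R_{ij} / (1 + R_{ij})`.
Both telescopes are run in multiplied-out form, so vanishing partition functions need no
separate treatment.
-/

/-- A hypergraph: a finite vertex set together with a finite set of hyperedges,
    each a finite set of vertices. -/
structure HGraph where
  V : Finset ℕ
  E : Finset (Finset ℕ)

namespace HGraph

/-- `I` is an independent set of `G`: no hyperedge is contained in `I`. -/
def indep (G : HGraph) (I : Finset ℕ) : Prop := ∀ e ∈ G.E, ¬ e ⊆ I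

open scoped Classical in
/-- The hardcore partition function Z(G) = Σ_{I independent} λ^{|I|}. -/
noncomputable def Z (G : HGraph) (lam : ℝ) : ℝ :=
  ∑ I ∈ G.V.powerset, if G.indep I then lam ^ I.card else 0

open scoped Classical in
/-- The Gibbs probability of the event `p` (a predicate on independent sets). -/
noncomputable def prob (G : HGraph) (lam : ℝ) (p : Finset ℕ → Prop) : ℝ :=
  (∑ I ∈ G.V.powerset, if G.indep I ∧ p I then lam ^ I.card else 0) / G.Z lam

/-- The marginal ratio R_u = Pr_G[u ∈ I] / Pr_G[u ∉ I]. -/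
noncomputable def Rratio (G : HGraph) (lam : ℝ) (u : ℕ) : ℝ :=
  G.prob lam (fun I => u ∈ I) / G.prob lam (fun I => u ∉ I)

/-- Delete a set of vertices: remove them from the vertex set and from every
    hyperedge (iterating `G − v` over the set `S`). -/
def delVs (G : HGraph) (S : Finset ℕ) : HGraph :=
  ⟨G.V \ S, G.E.image (fun e => e \ S)⟩

/-- Delete a set of hyperedges from the edge set (iterating `G − e`). -/
def delEs (G : HGraph) (F : Finset (Finset ℕ)) : HGraph :=
  ⟨G.V, G.E \ F⟩

end HGraph

open Finset

theorem Fin.prod_mul_eq_prod_mul_of_mul_eq {M : Type*} [CommMonoid M] {n : ℕ} (a b : Fin n → M)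
    (z : ℕ → M) (h : ∀ i : Fin n, a i * z i = b i * z (i + 1)) :
    (∏ i, a i) * z 0 = (∏ i, b i) * z n := by
  induction n with
  | zero => simp
  | succ n ih =>
    have hlast := h (Fin.last n)
    rw [Fin.val_last] at hlast
    rw [Fin.prod_univ_castSucc, Fin.prod_univ_castSucc, mul_right_comm,
      ih _ _ fun i => h i.castSucc, mul_right_comm, mul_assoc, hlast, mul_assoc]

theorem Fin.filter_val_le_eq_insert_filter_lt {d : ℕ} (i : Fin d) :
    univ.filter (fun k : Fin d => (i : ℕ) ≤ k) = insert i (univ.filter (i < ·)) := by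
  ext k
  simp only [mem_filter, mem_univ, true_and, mem_insert]
  omega

theorem Fin.filter_val_succ_le_eq_filter_lt {d : ℕ} (i : Fin d) :
    univ.filter (fun k : Fin d => (i : ℕ) + 1 ≤ k) = univ.filter (i < ·) := by
  ext k
  simp only [mem_filter, mem_univ, true_and]
  omega

namespace HGraph

variable {lam : ℝ}

open scoped Classical in
noncomputable def restrictedZ (G : HGraph) (lam : ℝ) (p : Finset ℕ → Prop) : ℝ :=
  ∑ I ∈ G.V.powerset, if G.indep I ∧ p I then lam ^ I.card else 0

theorem prob_eq_restrictedZ_div (G : HGraph) (p : Finset ℕ → Prop) :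
    G.prob lam p = G.restrictedZ lam p / G.Z lam := rfl

open scoped Classical in
theorem restrictedZ_eq_sum_filter (G : HGraph) (p : Finset ℕ → Prop) [DecidablePred p] :
    G.restrictedZ lam p = ∑ I ∈ G.V.powerset.filter p, if G.indep I then lam ^ I.card else 0 := by
  simp only [restrictedZ, sum_filter, ← ite_and, and_comm]

theorem Z_eq_restrictedZ_add_restrictedZ_not (G : HGraph) (p : Finset ℕ → Prop) :
    G.Z lam = G.restrictedZ lam p + G.restrictedZ lam (fun I => ¬ p I) := by
  classical
  rw [Z, restrictedZ, restrictedZ, ← sum_add_distrib]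
  refine sum_congr rfl fun I _ => ?_
  by_cases hI : G.indep I <;> by_cases hp : p I <;> simp [hI, hp]

theorem restrictedZ_nonneg (hlam : 0 ≤ lam) (G : HGraph) (p : Finset ℕ → Prop) :
    0 ≤ G.restrictedZ lam p :=
  sum_nonneg fun _ _ => by split_ifs <;> positivity

theorem restrictedZ_eq_zero_of_empty_mem {G : HGraph} (h : ∅ ∈ G.E) (p : Finset ℕ → Prop) :
    G.restrictedZ lam p = 0 :=
  sum_eq_zero fun I _ => if_neg fun hI => hI.1 ∅ h (empty_subset I)

theorem one_le_restrictedZ_of_empty_notMem (hlam : 0 ≤ lam) {G : HGraph} (h : ∅ ∉ G.E)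
    {p : Finset ℕ → Prop} (hp : p ∅) : 1 ≤ G.restrictedZ lam p := by
  classical
  have hind : G.indep ∅ := fun e he hsub => h (subset_empty.mp hsub ▸ he)
  have := single_le_sum (f := fun I => if G.indep I ∧ p I then lam ^ I.card else 0)
    (fun _ _ => by split_ifs <;> positivity) (empty_mem_powerset G.V)
  rw [restrictedZ]
  simpa [hind, hp] using this

theorem Z_pos (hlam : 0 ≤ lam) {G : HGraph} (h : ∅ ∉ G.E) : 0 < G.Z lam := by
  rw [Z_eq_restrictedZ_add_restrictedZ_not G (fun _ => True)]
  linarith [one_le_restrictedZ_of_empty_notMem hlam h (p := fun _ => True) trivial,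
    restrictedZ_nonneg hlam G (fun _ => ¬True)]

theorem indep_delVs_iff (G : HGraph) (S J : Finset ℕ) :
    (G.delVs S).indep J ↔ G.indep (S ∪ J) := by
  simp [indep, delVs]

theorem delVs_delVs (G : HGraph) (S T : Finset ℕ) : (G.delVs S).delVs T = G.delVs (S ∪ T) := by
  simp only [delVs, sdiff_sdiff_left, sup_eq_union, image_image, Function.comp_def]

theorem delVs_empty (G : HGraph) : G.delVs ∅ = G := by
  simp [delVs]

theorem restrictedZ_superset (G : HGraph) {S : Finset ℕ} (hS : S ⊆ G.V) :
    G.restrictedZ lam (S ⊆ ·) = lam ^ S.card * (G.delVs S).Z lam := by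
  rw [Z, mul_sum, restrictedZ_eq_sum_filter]
  refine sum_nbij' (· \ S) (S ∪ ·) ?_ ?_ ?_ ?_ ?_
  · intro I hI
    simp only [mem_filter, mem_powerset] at hI
    simp [delVs, sdiff_subset_sdiff hI.1 le_rfl]
  · intro J hJ
    simp only [delVs, mem_powerset] at hJ
    simp [union_subset hS (hJ.trans sdiff_subset)]
  · intro I hI
    exact union_sdiff_of_subset (mem_filter.mp hI).2
  · intro J hJ
    simp only [delVs, mem_powerset] at hJ
    exact union_sdiff_cancel_left (disjoint_of_subset_right hJ disjoint_sdiff)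
  · intro I hI
    have hSI := (mem_filter.mp hI).2
    rw [indep_delVs_iff, union_sdiff_of_subset hSI, mul_ite, ← pow_add,
      add_comm, card_sdiff_add_card_eq_card hSI, mul_zero]

theorem restrictedZ_mem (G : HGraph) {u : ℕ} (hu : u ∈ G.V) :
    G.restrictedZ lam (u ∈ ·) = lam * (G.delVs {u}).Z lam := by
  simpa using G.restrictedZ_superset (lam := lam) (singleton_subset_iff.mpr hu)

theorem restrictedZ_notMem (G : HGraph) (u : ℕ) :
    G.restrictedZ lam (u ∉ ·) = Z ⟨G.V.erase u, G.E.filter (u ∉ ·)⟩ lam := by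
  classical
  have hsets : G.V.powerset.filter (u ∉ ·) = (G.V.erase u).powerset := by
    ext I
    simp [subset_erase]
  rw [restrictedZ_eq_sum_filter, hsets, Z]
  refine sum_congr rfl fun I hI => ?_
  have huI : u ∉ I := fun h => (mem_erase.mp (mem_powerset.mp hI h)).1 rfl
  have hind : G.indep I ↔ HGraph.indep ⟨G.V.erase u, G.E.filter (u ∉ ·)⟩ I :=
    ⟨fun h e he => h e (mem_filter.mp he).1,
      fun h e he hsub => h e (mem_filter.mpr ⟨he, fun hu => huI (hsub hu)⟩) hsub⟩
  simp only [hind]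

theorem Z_insert_isolated (V : Finset ℕ) (E : Finset (Finset ℕ)) {x : ℕ} (hxV : x ∉ V)
    (hxE : ∀ e ∈ E, x ∉ e) : Z ⟨insert x V, E⟩ lam = (1 + lam) * Z ⟨V, E⟩ lam := by
  have hdel : HGraph.delVs ⟨insert x V, E⟩ {x} = ⟨V, E⟩ := by
    simp only [delVs, HGraph.mk.injEq, sdiff_singleton_eq_erase, erase_insert hxV, true_and]
    exact (image_congr fun e he => erase_eq_self.mpr (hxE e he)).trans image_id
  rw [Z_eq_restrictedZ_add_restrictedZ_not _ (x ∈ ·), restrictedZ_mem _ (mem_insert_self x V),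
    hdel, restrictedZ_notMem, erase_insert hxV, filter_true_of_mem hxE]
  ring

theorem Z_union_isolated (V W : Finset ℕ) (E : Finset (Finset ℕ)) (hWV : Disjoint W V)
    (hWE : ∀ x ∈ W, ∀ e ∈ E, x ∉ e) : Z ⟨V ∪ W, E⟩ lam = (1 + lam) ^ W.card * Z ⟨V, E⟩ lam := by
  induction W using Finset.induction_on with
  | empty => simp
  | insert x W hxW ih =>
    rw [union_insert, Z_insert_isolated, ih (disjoint_of_subset_left (subset_insert x W) hWV)
        fun y hy => hWE y (mem_insert_of_mem hy), card_insert_of_notMem hxW, pow_succ]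
    · ring
    · exact fun h => (mem_union.mp h).elim (disjoint_left.mp hWV (mem_insert_self x W)) hxW
    · exact hWE x (mem_insert_self x W)

theorem Z_eq_Z_insert_add (G : HGraph) {S : Finset ℕ} (hS : S ⊆ G.V) :
    G.Z lam = Z ⟨G.V, insert S G.E⟩ lam + lam ^ S.card * (G.delVs S).Z lam := by
  classical
  rw [Z_eq_restrictedZ_add_restrictedZ_not _ (S ⊆ ·), restrictedZ_superset _ hS, add_comm]
  congr 1
  rw [restrictedZ, Z]
  refine sum_congr rfl fun I _ => ?_
  have hind : HGraph.indep ⟨G.V, insert S G.E⟩ I ↔ G.indep I ∧ ¬ S ⊆ I := by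
    simp only [indep, forall_mem_insert, and_comm]
  simp only [hind]
  congr

theorem Rratio_eq_div (hlam : 0 ≤ lam) {G : HGraph} (h : ∅ ∉ G.E) (u : ℕ) :
    G.Rratio lam u = G.restrictedZ lam (u ∈ ·) / G.restrictedZ lam (u ∉ ·) := by
  rw [Rratio, prob_eq_restrictedZ_div, prob_eq_restrictedZ_div,
    div_div_div_cancel_right₀ (Z_pos hlam h).ne']

theorem Rratio_eq_mul_div (hlam : 0 ≤ lam) {G : HGraph} (h : ∅ ∉ G.E) {u : ℕ} (hu : u ∈ G.V) :
    G.Rratio lam u = lam * (G.delVs {u}).Z lam / Z ⟨G.V.erase u, G.E.filter (u ∉ ·)⟩ lam := by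
  rw [Rratio_eq_div hlam h, restrictedZ_mem _ hu, restrictedZ_notMem]

theorem Rratio_div_one_add_Rratio_mul_Z (hlam : 0 ≤ lam) (G : HGraph) (u : ℕ) :
    G.Rratio lam u / (1 + G.Rratio lam u) * G.Z lam = G.restrictedZ lam (u ∈ ·) := by
  rw [Z_eq_restrictedZ_add_restrictedZ_not G (u ∈ ·)]
  by_cases h : ∅ ∈ G.E
  · simp [restrictedZ_eq_zero_of_empty_mem h]
  · have hout := one_le_restrictedZ_of_empty_notMem hlam h (p := (u ∉ ·)) (notMem_empty u)
    have hin := restrictedZ_nonneg hlam G (u ∈ ·)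
    rw [Rratio_eq_div hlam h]
    field_simp
    ring

/-- Pinning `u 0, …, u (j - 1)` turns the count of independent sets containing `u j` into
`R j / (1 + R j)` times the partition function, so the product telescopes. -/
theorem one_sub_prod_mul_Z (hlam : 0 ≤ lam) (A : HGraph) {n : ℕ} {u : ℕ → ℕ}
    (hu : Set.InjOn u {j | j < n}) (huA : ∀ j < n, u j ∈ A.V) (R : ℕ → ℝ)
    (hR : ∀ j < n, R j = (A.delVs ((range j).image u)).Rratio lam (u j)) :
    (1 - ∏ j ∈ range n, R j / (1 + R j)) * A.Z lam
      = Z ⟨A.V, insert ((range n).image u) A.E⟩ lam := by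
  set z : ℕ → ℝ := fun j => (A.delVs ((range j).image u)).Z lam
  have hstep (j : Fin n) : R j / (1 + R j) * z j = lam * z (j + 1) := by
    have hfresh : u j ∉ (range j).image u := by
      simp only [mem_image, mem_range, not_exists, not_and]
      exact fun m hm hmj => hm.ne (hu (hm.trans j.isLt) j.isLt hmj)
    show _ = lam * (A.delVs ((range (j + 1)).image u)).Z lam
    rw [hR j j.isLt, Rratio_div_one_add_Rratio_mul_Z hlam,
      restrictedZ_mem _ (mem_sdiff.mpr ⟨huA j j.isLt, hfresh⟩), delVs_delVs, range_add_one,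
      image_insert, insert_eq, union_comm]
  have htel := Fin.prod_mul_eq_prod_mul_of_mul_eq _ _ z hstep
  simp only [z, range_zero, image_empty, delVs_empty, Fin.prod_const] at htel
  have hcard : ((range n).image u).card = n := by
    rw [card_image_of_injOn (by rwa [coe_range]), card_range]
  have hsplit := A.Z_eq_Z_insert_add (lam := lam) (S := (range n).image u) fun x hx => by
    obtain ⟨j, hj, rfl⟩ := mem_image.mp hx
    exact huA j (mem_range.mp hj)
  rw [hcard] at hsplit
  rw [sub_mul, one_mul, prod_range (fun j => R j / (1 + R j)), htel]
  linarith

theorem one_sub_prod_mul_Z_of_isolated (hlam : 0 ≤ lam) {V W : Finset ℕ}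
    {E : Finset (Finset ℕ)} (hWV : Disjoint W V) (hE : ∀ e ∈ E, e ⊆ V) {n : ℕ} {u : ℕ → ℕ}
    (hu : Set.InjOn u {j | j < n}) (huV : ∀ j < n, u j ∈ V) (R : ℕ → ℝ)
    (hR : ∀ j < n, R j = (HGraph.delVs ⟨V ∪ W, E⟩ ((range j).image u)).Rratio lam (u j)) :
    (1 - ∏ j ∈ range n, R j / (1 + R j)) * Z ⟨V, E⟩ lam
      = Z ⟨V, insert ((range n).image u) E⟩ lam := by
  have heV : (range n).image u ⊆ V := by
    intro x hx
    obtain ⟨j, hj, rfl⟩ := mem_image.mp hx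
    exact huV j (mem_range.mp hj)
  have hisolated {E' : Finset (Finset ℕ)} (hE' : ∀ e ∈ E', e ⊆ V) : ∀ x ∈ W, ∀ e ∈ E', x ∉ e :=
    fun x hx e he hxe => disjoint_left.mp hWV hx (hE' e he hxe)
  have hmain := one_sub_prod_mul_Z hlam ⟨V ∪ W, E⟩ hu
    (fun j hj => mem_union_left W (huV j hj)) R hR
  rw [Z_union_isolated V W E hWV (hisolated hE), Z_union_isolated V W _ hWV
    (hisolated (forall_mem_insert _ _ _ |>.mpr ⟨heV, hE⟩)), mul_left_comm] at hmain
  exact mul_left_cancel₀ (by positivity) hmain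

theorem delVs_singleton_eq {G : HGraph} {v d : ℕ} {eset : Fin d → Finset ℕ}
    (hinc : ∀ e ∈ G.E, v ∈ e ↔ ∃ i, e = insert v (eset i))
    (hmem : ∀ i, insert v (eset i) ∈ G.E) (hv : ∀ i, v ∉ eset i) :
    G.delVs {v} = ⟨G.V.erase v, G.E.filter (v ∉ ·) ∪ univ.image eset⟩ := by
  simp only [delVs, sdiff_singleton_eq_erase, HGraph.mk.injEq, true_and]
  ext e
  simp only [mem_image, mem_union, mem_filter, mem_univ, true_and]
  constructor
  · rintro ⟨e, he, rfl⟩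
    by_cases hve : v ∈ e
    · obtain ⟨i, rfl⟩ := (hinc e he).mp hve
      exact Or.inr ⟨i, by rw [erase_insert (hv i)]⟩
    · exact Or.inl ⟨by rwa [erase_eq_self.mpr hve], by simp⟩
  · rintro (⟨he, hve⟩ | ⟨i, rfl⟩)
    · exact ⟨e, he, erase_eq_self.mpr hve⟩
    · exact ⟨_, hmem i, erase_insert (hv i)⟩

/-- For `V0 = V ∖ {v}` and `E0` the edges avoiding `v`, this is `G - v` with the shrunk edges
`eset k = e_k - v` for (0-based) `k < s` deleted, i.e. `H_s` of the sketch above. -/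
def suffixGraph (V0 : Finset ℕ) (E0 : Finset (Finset ℕ)) {d : ℕ} (eset : Fin d → Finset ℕ)
    (s : ℕ) : HGraph :=
  ⟨V0, E0 ∪ (univ.filter (fun k : Fin d => s ≤ (k : ℕ))).image eset⟩

theorem suffixGraph_zero (V0 : Finset ℕ) (E0 : Finset (Finset ℕ)) {d : ℕ}
    (eset : Fin d → Finset ℕ) : suffixGraph V0 E0 eset 0 = ⟨V0, E0 ∪ univ.image eset⟩ := by
  simp [suffixGraph]

theorem suffixGraph_self (V0 : Finset ℕ) (E0 : Finset (Finset ℕ)) {d : ℕ}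
    (eset : Fin d → Finset ℕ) : suffixGraph V0 E0 eset d = ⟨V0, E0⟩ := by
  have hnone : univ.filter (fun k : Fin d => d ≤ (k : ℕ)) = ∅ :=
    filter_false_of_mem fun k _ => not_le.mpr k.isLt
  simp [suffixGraph, hnone]

theorem one_sub_prod_mul_Z_suffixGraph (hlam : 0 ≤ lam) {V0 W : Finset ℕ}
    {E0 : Finset (Finset ℕ)} {d : ℕ} {eset : Fin d → Finset ℕ} (hE0 : ∀ e ∈ E0, e ⊆ V0)
    (hesetV : ∀ k, eset k ⊆ V0) (hWV : Disjoint W V0) (i : Fin d) {n : ℕ} {u : ℕ → ℕ}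
    (hu : Set.InjOn u {j | j < n}) (hei : eset i = (range n).image u) (R : ℕ → ℝ)
    (hR : ∀ j < n, R j = (HGraph.delVs ⟨V0 ∪ W, E0 ∪ (univ.filter (i < ·)).image eset⟩
      ((range j).image u)).Rratio lam (u j)) :
    (1 - ∏ j ∈ range n, R j / (1 + R j)) * (suffixGraph V0 E0 eset (i + 1)).Z lam
      = (suffixGraph V0 E0 eset i).Z lam := by
  have hE : ∀ e ∈ E0 ∪ (univ.filter (i < ·)).image eset, e ⊆ V0 := by
    simp only [mem_union, mem_image]
    rintro e (he | ⟨k, -, rfl⟩)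
    exacts [hE0 e he, hesetV k]
  have key := one_sub_prod_mul_Z_of_isolated hlam hWV hE hu
    (fun j hj => hesetV i (hei ▸ mem_image_of_mem u (mem_range.mpr hj))) R hR
  rw [← hei] at key
  simpa only [suffixGraph, Fin.filter_val_succ_le_eq_filter_lt,
    Fin.filter_val_le_eq_insert_filter_lt, image_insert, union_insert] using key

theorem delEs_delVs_split_eq {V0 : Finset ℕ} {E0 : Finset (Finset ℕ)} {d : ℕ}
    {eset : Fin d → Finset ℕ} {vc : Fin d → ℕ} (hE0 : ∀ e ∈ E0, e ⊆ V0)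
    (hesetV : ∀ k, eset k ⊆ V0) (hesetE : ∀ k, eset k ∉ E0) (heset : Function.Injective eset)
    (hvc : Function.Injective vc) (hvcV : ∀ k, vc k ∉ V0) (i : Fin d) :
    delEs
      (delVs ⟨V0 ∪ univ.image vc, E0 ∪ univ.image (fun k => insert (vc k) (eset k))⟩
        ((univ.filter (fun k => i ≤ k)).image vc))
      (insert (eset i) ((univ.filter (fun k => k < i)).image fun k => insert (vc k) (eset k)))
    = ⟨V0 ∪ (univ.filter (fun k => k < i)).image vc,
        E0 ∪ (univ.filter (fun k => i < k)).image eset⟩ := by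
  set S := (univ.filter (fun k => i ≤ k)).image vc
  have hvcS (k : Fin d) : vc k ∈ S ↔ i ≤ k := by simp [S, hvc.eq_iff]
  have hdisj {e : Finset ℕ} (he : e ⊆ V0) : e \ S = e :=
    sdiff_eq_self_of_disjoint (disjoint_of_subset_left he (by
      simp only [S, disjoint_left, mem_image]
      rintro _ hx ⟨k, -, rfl⟩
      exact hvcV k hx))
  have hE0S : E0.image (· \ S) = E0 := (image_congr fun e he => hdisj (hE0 e he)).trans image_id
  have hfS (k : Fin d) :
      insert (vc k) (eset k) \ S = if i ≤ k then eset k else insert (vc k) (eset k) := by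
    split_ifs with h
    · rw [insert_sdiff_of_mem _ ((hvcS k).mpr h), hdisj (hesetV k)]
    · rw [insert_sdiff_of_notMem _ (fun h' => h ((hvcS k).mp h')), hdisj (hesetV k)]
  simp only [delVs, delEs, HGraph.mk.injEq, image_union, image_image, Function.comp_def, hfS,
    hE0S]
  constructor
  · ext x
    simp only [mem_sdiff, mem_union, mem_image, mem_filter, mem_univ, true_and, S]
    grind
  · ext e
    simp only [mem_sdiff, mem_union, mem_image, mem_filter, mem_univ, true_and, mem_insert]
    grind

end HGraph

/-- Indices are 0-based: `vij i j` is the paper's `v_{i+1,j+1}` and `Gij i j` its `G_{i+1,j+1}`. -/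
theorem stmt_0_general (lam : ℝ) (hlam : 0 < lam)
    (G : HGraph) (hGE : ∀ e ∈ G.E, e ⊆ G.V) (hGne : ∅ ∉ G.E)
    (v : ℕ) (hv : v ∈ G.V)
    (d : ℕ) (w : Fin d → ℕ) (vij : Fin d → ℕ → ℕ)
    (hvinj : ∀ i, Set.InjOn (vij i) {j : ℕ | j < w i})
    (eset : Fin d → Finset ℕ)
    (heset : ∀ i, eset i = Finset.image (vij i) (Finset.range (w i)))
    (hmem : ∀ i, insert v (eset i) ∈ G.E)
    (hinc : ∀ e ∈ G.E, v ∈ e ↔ ∃ i, e = insert v (eset i))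
    (hedist : Function.Injective (fun i => insert v (eset i)))
    (hnosub : ∀ i, eset i ∉ G.E)
    (vc : Fin d → ℕ) (hvcinj : Function.Injective vc) (hvcfresh : ∀ i, vc i ∉ G.V)
    (G' : HGraph)
    (hG' : G' = ⟨(G.V.erase v) ∪ Finset.image vc Finset.univ,
        (G.E.filter (fun e => v ∉ e)) ∪
          Finset.image (fun i => insert (vc i) (eset i)) Finset.univ⟩)
    (Gij : Fin d → ℕ → HGraph)
    (hGij : ∀ (i : Fin d), ∀ j < w i, Gij i j =
        HGraph.delVs
          (HGraph.delEs
            (HGraph.delVs G' (Finset.image vc (Finset.filter (fun k => i ≤ k) Finset.univ)))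
            (insert (eset i)
              (Finset.image (fun k => insert (vc k) (eset k))
                (Finset.filter (fun k => k < i) Finset.univ))))
          (Finset.image (vij i) (Finset.range j)))
    (R : ℝ) (hR : R = G.Rratio lam v)
    (Rij : Fin d → ℕ → ℝ)
    (hRij : ∀ (i : Fin d), ∀ j < w i, Rij i j = (Gij i j).Rratio lam (vij i j)) :
    R = lam * ∏ i : Fin d, (1 - ∏ j ∈ Finset.range (w i), Rij i j / (1 + Rij i j)) := by
  subst hR hG'
  set V0 := G.V.erase v
  set E0 := G.E.filter (v ∉ ·)
  have hvE (k : Fin d) : v ∉ eset k := fun h =>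
    hnosub k (by simpa [insert_eq_of_mem h] using hmem k)
  have hesetV (k : Fin d) : eset k ⊆ V0 := fun x hx =>
    mem_erase.mpr ⟨fun h => hvE k (h ▸ hx), hGE _ (hmem k) (mem_insert_of_mem hx)⟩
  have hE0 : ∀ e ∈ E0, e ⊆ V0 := fun e he x hx =>
    mem_erase.mpr ⟨fun h => (mem_filter.mp he).2 (h ▸ hx), hGE e (mem_filter.mp he).1 hx⟩
  have hstep (i : Fin d) : 1 * (HGraph.suffixGraph V0 E0 eset i).Z lam
      = (1 - ∏ j ∈ range (w i), Rij i j / (1 + Rij i j))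
        * (HGraph.suffixGraph V0 E0 eset (i + 1)).Z lam := by
    have hWV : Disjoint ((univ.filter (· < i)).image vc) V0 := by
      simp only [disjoint_left, mem_image]
      rintro _ ⟨k, -, rfl⟩ hk
      exact hvcfresh k (mem_of_mem_erase hk)
    rw [one_mul, HGraph.one_sub_prod_mul_Z_suffixGraph hlam.le hE0 hesetV hWV i (hvinj i)
      (heset i) (Rij i) fun j hj => ?_]
    rw [hRij i j hj, hGij i j hj, HGraph.delEs_delVs_split_eq hE0 hesetV
      (fun k h => hnosub k (mem_filter.mp h).1) (fun a b h => hedist (congrArg (insert v) h))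
      hvcinj (fun k h => hvcfresh k (mem_of_mem_erase h))]
  have htel := Fin.prod_mul_eq_prod_mul_of_mul_eq _ _
    (fun s => (HGraph.suffixGraph V0 E0 eset s).Z lam) hstep
  rw [prod_const_one, one_mul, HGraph.suffixGraph_zero, HGraph.suffixGraph_self] at htel
  rw [HGraph.Rratio_eq_mul_div hlam.le hGne hv, HGraph.delVs_singleton_eq hinc hmem hvE, htel,
    mul_div_assoc, mul_div_cancel_right₀ _
      (HGraph.Z_pos hlam.le fun h => hGne (mem_filter.mp h).1).ne']

/-- Lemma: recursion for the marginal ratio in the hypergraph hardcore model.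
    `v` has degree `d`, with incident hyperedges `e i = insert v (eset i)` where
    `eset i = {vij i 0, …, vij i (w i − 1)}` (so `vij i j` is the paper's
    v_{i,j+1}).  `G'` splits `v` into fresh copies `vc i`, one per incident edge,
    and `Gij i j` (the paper's G_{i+1,j+1}) is obtained from `G'` by deleting the
    vertices {vc k : k ≥ i}, then the hyperedges derived from {e k : k ≤ i}
    (which at that point are `eset i` and `insert (vc k) (eset k)` for k < i),
    and then the vertices {vij i k : k < j}.  Then
    R_v = λ·∏ᵢ(1 − ∏ⱼ R_{ij}/(1+R_{ij})). -/
theorem stmt_0 (lam : ℝ) (hlam : 0 < lam)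
    (G : HGraph) (hGE : ∀ e ∈ G.E, e ⊆ G.V) (hGne : ∅ ∉ G.E)
    (v : ℕ) (hv : v ∈ G.V)
    (d : ℕ) (w : Fin d → ℕ) (vij : Fin d → ℕ → ℕ)
    (hvmem : ∀ i j, j < w i → vij i j ∈ G.V)
    (hvne : ∀ i j, j < w i → vij i j ≠ v)
    (hvinj : ∀ i, Set.InjOn (vij i) {j : ℕ | j < w i})
    (eset : Fin d → Finset ℕ)
    (heset : ∀ i, eset i = Finset.image (vij i) (Finset.range (w i)))
    (hmem : ∀ i, insert v (eset i) ∈ G.E)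
    (hinc : ∀ e ∈ G.E, v ∈ e ↔ ∃ i, e = insert v (eset i))
    (hedist : Function.Injective (fun i => insert v (eset i)))
    (hnosub : ∀ i, eset i ∉ G.E)
    (vc : Fin d → ℕ) (hvcinj : Function.Injective vc) (hvcfresh : ∀ i, vc i ∉ G.V)
    (G' : HGraph)
    (hG' : G' = ⟨(G.V.erase v) ∪ Finset.image vc Finset.univ,
        (G.E.filter (fun e => v ∉ e)) ∪
          Finset.image (fun i => insert (vc i) (eset i)) Finset.univ⟩)
    (Gij : Fin d → ℕ → HGraph)
    (hGij : ∀ (i : Fin d), ∀ j < w i, Gij i j =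
        HGraph.delVs
          (HGraph.delEs
            (HGraph.delVs G' (Finset.image vc (Finset.filter (fun k => i ≤ k) Finset.univ)))
            (insert (eset i)
              (Finset.image (fun k => insert (vc k) (eset k))
                (Finset.filter (fun k => k < i) Finset.univ))))
          (Finset.image (vij i) (Finset.range j)))
    (R : ℝ) (hR : R = G.Rratio lam v)
    (Rij : Fin d → ℕ → ℝ)
    (hRij : ∀ (i : Fin d), ∀ j < w i, Rij i j = (Gij i j).Rratio lam (vij i j)) :
    R = lam * ∏ i : Fin d, (1 - ∏ j ∈ Finset.range (w i), Rij i j / (1 + Rij i j)) :=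
  stmt_0_general lam hlam G hGE hGne v hv d w vij hvinj eset heset hmem hinc hedist hnosub vc hvcinj
    hvcfresh G' hG' Gij hGij R hR Rij hRij
end

section
/- Let d ≥ 2 be an integer and for λ > 0 let f_{λ,d}(x) = λ (1/(1+x))^d. Then f_{λ,d} has a unique positive fixed point x̂ (i.e., x̂ > 0 with f_{λ,d}(x̂) = x̂). Moreover, setting λ_c = d^d/(d−1)^{d+1}: if λ = λ_c then |f'_{λ,d}(x̂)| = 1, and for every 0 < λ < λ_c it holds that |f'_{λ,d}(x̂)| < 1. -/
/-!
Clearing the denominator, `x > 0` is a fixed point of `f(x) = λ/(1+x)^d` iff `x (1+x)^d = λ`.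
The left side is strictly increasing on `[0, ∞)`, which gives existence and uniqueness of
`x̂`, and it takes the value `λ_c` at `x = 1/(d-1)`, so `λ = λ_c` resp. `λ < λ_c` means
`x̂ = 1/(d-1)` resp. `x̂ < 1/(d-1)`. At a fixed point `f'(x̂) = -d f(x̂)/(1+x̂) = -d x̂/(1+x̂)`,
and `d x̂/(1+x̂) ≤ 1` iff `x̂ ≤ 1/(d-1)`, with equality in one iff in the other.
-/

open Set

lemma strictMonoOn_mul_one_add_pow (d : ℕ) :
    StrictMonoOn (fun x : ℝ => x * (1 + x) ^ d) (Ici 0) := by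
  intro x (hx : 0 ≤ x) y (hy : 0 ≤ y) hxy
  have hpow : (1 + x) ^ d ≤ (1 + y) ^ d := by gcongr
  exact mul_lt_mul hxy hpow (by positivity) hy

lemma exists_pos_mul_one_add_pow_eq (d : ℕ) {lam : ℝ} (hlam : 0 < lam) :
    ∃ x, 0 < x ∧ x * (1 + x) ^ d = lam := by
  have hle : lam ≤ lam * (1 + lam) ^ d :=
    le_mul_of_one_le_right hlam.le (one_le_pow₀ (by linarith))
  have hcont : ContinuousOn (fun x : ℝ => x * (1 + x) ^ d) (Icc 0 lam) := by fun_prop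
  obtain ⟨x, hx0, hx⟩ := intermediate_value_Icc hlam.le hcont ⟨by simpa using hlam.le, hle⟩
  refine ⟨x, hx0.1.lt_of_ne ?_, hx⟩
  rintro rfl
  simp [hlam.ne] at hx

lemma div_one_add_pow_eq_self_iff {lam x : ℝ} (d : ℕ) (hx : 1 + x ≠ 0) :
    lam / (1 + x) ^ d = x ↔ x * (1 + x) ^ d = lam := by
  rw [div_eq_iff (pow_ne_zero d hx), eq_comm]

lemma existsUnique_pos_div_one_add_pow_eq_self (d : ℕ) {lam : ℝ} (hlam : 0 < lam) :
    ∃! x : ℝ, 0 < x ∧ lam / (1 + x) ^ d = x := by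
  have hiff {x : ℝ} (hx : 0 < x) : lam / (1 + x) ^ d = x ↔ x * (1 + x) ^ d = lam :=
    div_one_add_pow_eq_self_iff d (by positivity)
  obtain ⟨x, hx, hgx⟩ := exists_pos_mul_one_add_pow_eq d hlam
  refine ⟨x, ⟨hx, (hiff hx).2 hgx⟩, fun y ⟨hy, hfix⟩ => ?_⟩
  exact strictMonoOn_mul_one_add_pow d |>.injOn (mem_Ici.2 hy.le) (mem_Ici.2 hx.le)
    (((hiff hy).1 hfix).trans hgx.symm)

lemma hasDerivAt_div_one_add_pow (lam : ℝ) (d : ℕ) {x : ℝ} (hx : 1 + x ≠ 0) :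
    HasDerivAt (fun y : ℝ => lam / (1 + y) ^ d) (-(d * lam / (1 + x) ^ (d + 1))) x := by
  have hpow : HasDerivAt (fun y : ℝ => (1 + y) ^ d) (d * (1 + x) ^ (d - 1) * 1) x :=
    ((hasDerivAt_id x).const_add 1).fun_pow d
  have hdiv : HasDerivAt (fun y : ℝ => lam / (1 + y) ^ d)
      ((0 * (1 + x) ^ d - lam * (d * (1 + x) ^ (d - 1) * 1)) / ((1 + x) ^ d) ^ 2) x :=
    (hasDerivAt_const x lam).fun_div hpow (pow_ne_zero d hx)
  convert hdiv using 1
  rcases d with _ | d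
  · simp
  · rw [Nat.add_sub_cancel]
    field_simp
    ring

lemma deriv_div_one_add_pow_of_eq_self {lam x : ℝ} (d : ℕ) (hx : 1 + x ≠ 0)
    (hfix : lam / (1 + x) ^ d = x) :
    deriv (fun y : ℝ => lam / (1 + y) ^ d) x = -(d * x / (1 + x)) := by
  rw [(hasDerivAt_div_one_add_pow lam d hx).deriv, pow_succ, ← div_div, mul_div_assoc, hfix]

lemma inv_sub_one_mul_one_add_pow {d : ℕ} (hd : d ≠ 1) :
    1 / ((d : ℝ) - 1) * (1 + 1 / ((d : ℝ) - 1)) ^ d =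
      (d : ℝ) ^ d / ((d : ℝ) - 1) ^ (d + 1) := by
  have h : (d : ℝ) - 1 ≠ 0 := sub_ne_zero.2 (by exact_mod_cast hd)
  rw [one_add_div h, sub_add_cancel, div_pow, pow_succ]
  field_simp

/-- For d ≥ 2 and λ > 0, f_{λ,d}(x) = λ/(1+x)^d has a unique positive fixed point x̂;
    moreover with λ_c = d^d/(d−1)^{d+1}: if λ = λ_c then |f'(x̂)| = 1, and if
    0 < λ < λ_c then |f'(x̂)| < 1. -/
theorem stmt_1 (d : ℕ) (hd : 2 ≤ d) (lam : ℝ) (hlam : 0 < lam) :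
    (∃! x : ℝ, 0 < x ∧ lam / (1 + x) ^ d = x) ∧
    (∀ xhat : ℝ, 0 < xhat → lam / (1 + xhat) ^ d = xhat →
      ((lam = (d : ℝ) ^ d / ((d : ℝ) - 1) ^ (d + 1) →
          |deriv (fun x : ℝ => lam / (1 + x) ^ d) xhat| = 1) ∧
       (lam < (d : ℝ) ^ d / ((d : ℝ) - 1) ^ (d + 1) →
          |deriv (fun x : ℝ => lam / (1 + x) ^ d) xhat| < 1))) := by
  refine ⟨existsUnique_pos_div_one_add_pow_eq_self d hlam, fun x hx hfix => ?_⟩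
  have hd1 : (0 : ℝ) < d - 1 := by
    have : (2 : ℝ) ≤ d := by exact_mod_cast hd
    linarith
  have h1x : 0 < 1 + x := by linarith
  have hgx := (div_one_add_pow_eq_self_iff d h1x.ne').1 hfix
  have hcrit := inv_sub_one_mul_one_add_pow (d := d) (by omega)
  have hmono := strictMonoOn_mul_one_add_pow d
  have hx0 : (1 / ((d : ℝ) - 1)) ∈ Ici 0 := mem_Ici.2 (by positivity)
  rw [deriv_div_one_add_pow_of_eq_self d h1x.ne' hfix, abs_neg, abs_of_pos (by positivity)]
  constructor
  · intro hc
    obtain rfl : x = 1 / ((d : ℝ) - 1) :=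
      hmono.injOn (mem_Ici.2 hx.le) hx0 (by rw [hgx, hc, hcrit])
    rw [one_add_div hd1.ne', sub_add_cancel]
    field_simp
  · intro hc
    have hlt : x < 1 / ((d : ℝ) - 1) :=
      (hmono.lt_iff_lt (mem_Ici.2 hx.le) hx0).1 (by rw [hgx, hcrit]; exact hc)
    rw [lt_div_iff₀ hd1] at hlt
    rw [div_lt_one h1x]
    linarith
end

section
/- Let D ⊆ ℝ be a convex set, let φ : ℝ → ℝ be increasing and continuously differentiable with Φ := φ' strictly positive on D, and let f : D^d → D be continuously differentiable. Then for every x = (x₁,…,x_d) and x̂ = (x̂₁,…,x̂_d) in D^d there exists x̃ = (x̃₁,…,x̃_d) ∈ D^d (lying on the segment between x and x̂) such that |φ(f(x)) − φ(f(x̂))| ≤ Σ_{i=1}^d (Φ(f(x̃))/Φ(x̃_i)) · |∂f/∂x_i (x̃)| · |φ(x_i) − φ(x̂_i)|. -/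
/-!
Pull the straight segment from `φ ∘ x` to `φ ∘ x̂` back through `φ`, coordinatewise:
`c t i = φ⁻¹((1 - t) φ(xᵢ) + t φ(x̂ᵢ))`. This path stays in the box spanned by `x` and `x̂`, and
by the inverse function rule `(c t i)' = (φ(x̂ᵢ) - φ(xᵢ)) / Φ(c t i)`. The mean value theorem for
`t ↦ φ(f(c t))` on `[0, 1]` and the chain rule then give the estimate at `x̃ = c t₀`.
-/

open Set Filter Topology Function

namespace StrictMono

variable {φ : ℝ → ℝ}

theorem range_mem_nhds (hφ : StrictMono φ) (hcont : Continuous φ) (b : ℝ) :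
    range φ ∈ 𝓝 (φ b) :=
  mem_of_superset (Ioo_mem_nhds (hφ (sub_one_lt b)) (hφ (lt_add_one b))) <|
    Ioo_subset_Icc_self.trans <|
      (intermediate_value_Icc (by linarith) hcont.continuousOn).trans (image_subset_range _ _)

theorem continuousAt_invFun (hφ : StrictMono φ) (hcont : Continuous φ) (b : ℝ) :
    ContinuousAt (invFun φ) (φ b) := by
  have hinv : LeftInverse (invFun φ) φ := leftInverse_invFun hφ.injective
  refine continuousAt_of_monotoneOn_of_image_mem_nhds ?_ (hφ.range_mem_nhds hcont b) ?_
  · rintro _ ⟨a, rfl⟩ _ ⟨a', rfl⟩ h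
    rw [hinv a, hinv a']
    exact hφ.le_iff_le.mp h
  · rw [← range_comp, hinv.comp_eq_id, range_id]
    exact univ_mem

theorem hasDerivAt_invFun (hφ : StrictMono φ) (hcont : Continuous φ) {b φ' : ℝ}
    (hb : HasDerivAt φ φ' b) (hφ' : φ' ≠ 0) : HasDerivAt (invFun φ) φ'⁻¹ (φ b) := by
  have hinv : LeftInverse (invFun φ) φ := leftInverse_invFun hφ.injective
  refine HasDerivAt.of_local_left_inverse (hφ.continuousAt_invFun hcont b) (by rwa [hinv b]) hφ' ?_
  filter_upwards [hφ.range_mem_nhds hcont b] with _ ⟨a, ha⟩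
  rw [← ha, hinv a]

end StrictMono

theorem fderiv_apply_eq_sum_deriv_update {𝕜 ι F : Type*} [NontriviallyNormedField 𝕜]
    [Fintype ι] [DecidableEq ι] [NormedAddCommGroup F] [NormedSpace 𝕜 F]
    {f : (ι → 𝕜) → F} {y : ι → 𝕜} (hf : DifferentiableAt 𝕜 f y) (v : ι → 𝕜) :
    fderiv 𝕜 f y v = ∑ i, v i • deriv (fun t => f (update y i t)) (y i) := by
  have hpartial (i : ι) :
      deriv (fun t => f (update y i t)) (y i) = fderiv 𝕜 f y (Pi.single i 1) :=
    (hf.hasFDerivAt.comp_hasDerivAt_of_eq (y i) (hasDerivAt_update y i (y i))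
      (update_eq_self i y).symm).deriv
  conv_lhs => rw [← Finset.univ_sum_single v]
  simp only [map_sum, hpartial, ← map_smul, ← Pi.single_smul, smul_eq_mul, mul_one]

section ConjLineMap

variable {ι : Type*} {φ : ℝ → ℝ} {x xhat : ι → ℝ} {t : ℝ}

noncomputable def conjLineMap (φ : ℝ → ℝ) (x xhat : ι → ℝ) (t : ℝ) : ι → ℝ :=
  fun i => invFun φ (AffineMap.lineMap (φ (x i)) (φ (xhat i)) t)

theorem conjLineMap_zero (hφ : Injective φ) : conjLineMap φ x xhat 0 = x := by
  funext i
  simp [conjLineMap, leftInverse_invFun hφ _]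

theorem conjLineMap_one (hφ : Injective φ) : conjLineMap φ x xhat 1 = xhat := by
  funext i
  simp [conjLineMap, leftInverse_invFun hφ _]

theorem exists_mem_uIcc_apply_eq_lineMap (hcont : Continuous φ) (ht : t ∈ Icc 0 1) (i : ι) :
    ∃ a ∈ uIcc (x i) (xhat i), φ a = AffineMap.lineMap (φ (x i)) (φ (xhat i)) t :=
  intermediate_value_uIcc hcont.continuousOn <| by
    rw [← segment_eq_uIcc, segment_eq_image_lineMap]
    exact mem_image_of_mem _ ht

theorem apply_conjLineMap (hcont : Continuous φ) (ht : t ∈ Icc 0 1) (i : ι) :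
    φ (conjLineMap φ x xhat t i) = AffineMap.lineMap (φ (x i)) (φ (xhat i)) t :=
  invFun_eq <| (exists_mem_uIcc_apply_eq_lineMap hcont ht i).imp fun _ ha => ha.2

theorem conjLineMap_mem_uIcc (hφ : StrictMono φ) (hcont : Continuous φ) (ht : t ∈ Icc 0 1)
    (i : ι) : conjLineMap φ x xhat t i ∈ uIcc (x i) (xhat i) := by
  obtain ⟨a, ha, hφa⟩ := exists_mem_uIcc_apply_eq_lineMap (xhat := xhat) hcont ht i
  rwa [conjLineMap, ← hφa, leftInverse_invFun hφ.injective]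

theorem hasDerivAt_conjLineMap (hφ : StrictMono φ) (hcont : Continuous φ) (ht : t ∈ Icc 0 1)
    (hdiff : ∀ i, DifferentiableAt ℝ φ (conjLineMap φ x xhat t i))
    (hne : ∀ i, deriv φ (conjLineMap φ x xhat t i) ≠ 0) :
    HasDerivAt (conjLineMap φ x xhat)
      (fun i => (deriv φ (conjLineMap φ x xhat t i))⁻¹ * (φ (xhat i) - φ (x i))) t := by
  rw [hasDerivAt_pi]
  intro i
  have hinv := hφ.hasDerivAt_invFun hcont (hdiff i).hasDerivAt (hne i)
  rw [apply_conjLineMap hcont ht] at hinv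
  exact hinv.comp t AffineMap.hasDerivAt_lineMap

theorem exists_sub_eq_sum_deriv_conjLineMap [Fintype ι] [DecidableEq ι] {f : (ι → ℝ) → ℝ}
    (hφ : StrictMono φ) (hφd : Differentiable ℝ φ) (hf : Differentiable ℝ f)
    (hne : ∀ t ∈ Icc (0 : ℝ) 1, ∀ i, deriv φ (conjLineMap φ x xhat t i) ≠ 0) :
    ∃ t ∈ Ioo (0 : ℝ) 1, φ (f xhat) - φ (f x) =
      deriv φ (f (conjLineMap φ x xhat t)) *
        ∑ i, (deriv φ (conjLineMap φ x xhat t i))⁻¹ * (φ (xhat i) - φ (x i)) *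
          deriv (fun s => f (update (conjLineMap φ x xhat t) i s)) (conjLineMap φ x xhat t i) := by
  set c := conjLineMap φ x xhat
  set v : ℝ → ι → ℝ := fun t i => (deriv φ (c t i))⁻¹ * (φ (xhat i) - φ (x i))
  have hF : ∀ t ∈ Icc (0 : ℝ) 1,
      HasDerivAt (fun s => φ (f (c s))) (deriv φ (f (c t)) * fderiv ℝ f (c t) (v t)) t :=
    fun t ht => (hφd _).hasDerivAt.comp t <| (hf _).hasFDerivAt.comp_hasDerivAt t <|
      hasDerivAt_conjLineMap hφ hφd.continuous ht (fun _ => hφd _) (hne t ht)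
  obtain ⟨t, ht, hslope⟩ := exists_hasDerivAt_eq_slope _ _ zero_lt_one
    (fun t ht => (hF t ht).continuousAt.continuousWithinAt)
    (fun t ht => hF t (Ioo_subset_Icc_self ht))
  refine ⟨t, ht, ?_⟩
  have hexpand := fderiv_apply_eq_sum_deriv_update (hf (c t)) (v t)
  simp only [smul_eq_mul] at hexpand
  have hc0 : c 0 = x := conjLineMap_zero hφ.injective
  have hc1 : c 1 = xhat := conjLineMap_one hφ.injective
  rw [← hexpand, hslope, hc0, hc1, sub_zero, div_one]

end ConjLineMap

theorem stmt_3_general (D : Set ℝ) (hD : Convex ℝ D)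
    (φ : ℝ → ℝ) (hφmono : StrictMono φ) (hφC1 : ContDiff ℝ 1 φ)
    (hΦ : ∀ x ∈ D, 0 < deriv φ x)
    (d : ℕ) (f : (Fin d → ℝ) → ℝ) (hfC1 : ContDiff ℝ 1 f)
    (x xhat : Fin d → ℝ) (hx : ∀ i, x i ∈ D) (hxhat : ∀ i, xhat i ∈ D) :
    ∃ y : Fin d → ℝ, (∀ i, y i ∈ D) ∧ (∀ i, y i ∈ segment ℝ (x i) (xhat i)) ∧
      |φ (f x) - φ (f xhat)| ≤
        ∑ i : Fin d, (deriv φ (f y) / deriv φ (y i)) *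
            |deriv (fun t => f (Function.update y i t)) (y i)| *
            |φ (x i) - φ (xhat i)| := by
  set c := conjLineMap φ x xhat
  have hc_mem (t : ℝ) (ht : t ∈ Icc 0 1) (i : Fin d) : c t i ∈ uIcc (x i) (xhat i) :=
    conjLineMap_mem_uIcc hφmono hφC1.continuous ht i
  have hcD (t : ℝ) (ht : t ∈ Icc 0 1) (i : Fin d) : c t i ∈ D :=
    hD.ordConnected.uIcc_subset (hx i) (hxhat i) (hc_mem t ht i)
  obtain ⟨t, ht, hmvt⟩ := exists_sub_eq_sum_deriv_conjLineMap hφmono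
    (hφC1.differentiable one_ne_zero) (hfC1.differentiable one_ne_zero)
    fun t ht i => (hΦ _ (hcD t ht i)).ne'
  replace ht := Ioo_subset_Icc_self ht
  refine ⟨c t, hcD t ht, fun i => segment_eq_uIcc (x i) (xhat i) ▸ hc_mem t ht i, ?_⟩
  have hΦf : 0 ≤ deriv φ (f (c t)) := hφmono.monotone.deriv_nonneg
  calc |φ (f x) - φ (f xhat)|
      = deriv φ (f (c t)) * |∑ i, (deriv φ (c t i))⁻¹ * (φ (xhat i) - φ (x i)) *
          deriv (fun s => f (update (c t) i s)) (c t i)| := by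
        rw [abs_sub_comm, hmvt, abs_mul, abs_of_nonneg hΦf]
    _ ≤ deriv φ (f (c t)) * ∑ i, |(deriv φ (c t i))⁻¹ * (φ (xhat i) - φ (x i)) *
          deriv (fun s => f (update (c t) i s)) (c t i)| := by
        gcongr
        exact Finset.abs_sum_le_sum_abs _ _
    _ = _ := by
        rw [Finset.mul_sum]
        refine Finset.sum_congr rfl fun i _ => ?_
        rw [abs_mul, abs_mul, abs_inv, abs_of_pos (hΦ _ (hcD t ht i)), abs_sub_comm]
        ring

/-- Mean-value decay step: for a convex set D ⊆ ℝ, an increasing C¹ function φ with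
    Φ = φ' > 0 on D, and a C¹ function f : D^d → D, for all x, x̂ ∈ D^d there is a
    point x̃ ∈ D^d, lying (coordinatewise) on the segment between x and x̂, with
    |φ(f(x)) − φ(f(x̂))| ≤ Σᵢ (Φ(f(x̃))/Φ(x̃ᵢ))·|∂f/∂xᵢ(x̃)|·|φ(xᵢ) − φ(x̂ᵢ)|. -/
theorem stmt_3 (D : Set ℝ) (hD : Convex ℝ D)
    (φ : ℝ → ℝ) (hφmono : StrictMono φ) (hφC1 : ContDiff ℝ 1 φ)
    (hΦ : ∀ x ∈ D, 0 < deriv φ x)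
    (d : ℕ) (f : (Fin d → ℝ) → ℝ) (hfC1 : ContDiff ℝ 1 f)
    (hf : ∀ x : Fin d → ℝ, (∀ i, x i ∈ D) → f x ∈ D)
    (x xhat : Fin d → ℝ) (hx : ∀ i, x i ∈ D) (hxhat : ∀ i, xhat i ∈ D) :
    ∃ y : Fin d → ℝ, (∀ i, y i ∈ D) ∧ (∀ i, y i ∈ segment ℝ (x i) (xhat i)) ∧
      |φ (f x) - φ (f xhat)| ≤
        ∑ i : Fin d, (deriv φ (f y) / deriv φ (y i)) *
            |deriv (fun t => f (Function.update y i t)) (y i)| *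
            |φ (x i) - φ (xhat i)| :=
  stmt_3_general D hD φ hφmono hφC1 hΦ d f hfC1 x xhat hx hxhat
end

section
/- Let λ > 0, let w ≥ 1 be an integer, set s = λ/(1+λ), and let t₁, …, t_w ∈ (0, s]. Define T = s^{−(w−1)} · ∏_{j=1}^w t_j (so T ∈ (0, s]). Then Σ_{j=1}^w (1 − t_j)/√(t_j) ≤ (1 − T)/√T + (w−1)·(1 − s)/√s. -/
/-!
Replacing two coordinates `a, b ∈ (0, s]` by `a * b / s` and `s` keeps the product and does not
decrease the sum: with `u = √a`, `v = √b`, `σ = √s` and `g u = (1 - u²) / u`, the sum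
`g u + g v` increases by `(σ - u) (σ - v) (1 - u v) / (u v σ) ≥ 0`. Absorbing the coordinates one at a time into a single
running coordinate leaves `w - 1` copies of `s` and one coordinate equal to `T`.
-/

open Set

lemma one_sub_sq_div_add_le {u v σ : ℝ} (hu : 0 < u) (hv : 0 < v) (huσ : u ≤ σ) (hvσ : v ≤ σ)
    (hσ : σ ≤ 1) :
    (1 - u ^ 2) / u + (1 - v ^ 2) / v ≤ (1 - (u * v / σ) ^ 2) / (u * v / σ) + (1 - σ ^ 2) / σ := by
  have hσ0 : 0 < σ := hu.trans_le huσ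
  have gain : (1 - (u * v / σ) ^ 2) / (u * v / σ) + (1 - σ ^ 2) / σ
      - ((1 - u ^ 2) / u + (1 - v ^ 2) / v) = (σ - u) * (σ - v) * (1 - u * v) / (u * v * σ) := by
    field_simp
    ring
  have huv : u * v ≤ 1 := by nlinarith [mul_le_mul huσ hvσ hv.le hσ0.le]
  have : 0 ≤ (σ - u) * (σ - v) * (1 - u * v) / (u * v * σ) := by
    apply div_nonneg _ (by positivity)
    exact mul_nonneg (mul_nonneg (sub_nonneg.2 huσ) (sub_nonneg.2 hvσ)) (sub_nonneg.2 huv)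
  linarith

section Smoothing

variable {s : ℝ}

lemma mul_div_mem_Ioc {a b : ℝ} (ha : a ∈ Ioc 0 s) (hb : b ∈ Ioc 0 s) : a * b / s ∈ Ioc 0 s := by
  have hs0 : 0 < s := ha.1.trans_le ha.2
  refine ⟨div_pos (mul_pos ha.1 hb.1) hs0, ?_⟩
  rw [div_le_iff₀ hs0, mul_comm s]
  exact mul_le_mul ha.2 hb.2 hb.1.le hs0.le

lemma one_sub_div_sqrt_add_le (hs : s ≤ 1) {a b : ℝ} (ha : a ∈ Ioc 0 s) (hb : b ∈ Ioc 0 s) :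
    (1 - a) / √a + (1 - b) / √b ≤ (1 - a * b / s) / √(a * b / s) + (1 - s) / √s := by
  have hs0 : 0 < s := ha.1.trans_le ha.2
  have hsqrt : √(a * b / s) = √a * √b / √s := by
    rw [Real.sqrt_div (mul_nonneg ha.1.le hb.1.le), Real.sqrt_mul ha.1.le]
  have key := one_sub_sq_div_add_le (Real.sqrt_pos.2 ha.1) (Real.sqrt_pos.2 hb.1)
    (Real.sqrt_le_sqrt ha.2) (Real.sqrt_le_sqrt hb.2) (Real.sqrt_le_one.2 hs)
  rwa [← hsqrt, Real.sq_sqrt ha.1.le, Real.sq_sqrt hb.1.le, Real.sq_sqrt hs0.le,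
    Real.sq_sqrt (mul_div_mem_Ioc ha hb).1.le] at key

lemma prod_div_pow_succ {n : ℕ} (t : Fin (n + 2) → ℝ) :
    (∏ j, t j) / s ^ (n + 1) = t 0 * ((∏ j : Fin (n + 1), t j.succ) / s ^ n) / s := by
  rw [Fin.prod_univ_succ, pow_succ]
  ring

lemma prod_div_pow_mem_Ioc {n : ℕ} (t : Fin (n + 1) → ℝ) (ht : ∀ j, t j ∈ Ioc 0 s) :
    (∏ j, t j) / s ^ n ∈ Ioc 0 s := by
  induction n with
  | zero => simpa using ht 0
  | succ n ih =>
    rw [prod_div_pow_succ]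
    exact mul_div_mem_Ioc (ht 0) (ih _ fun j => ht j.succ)

lemma sum_one_sub_div_sqrt_le (hs : s ≤ 1) {n : ℕ} (t : Fin (n + 1) → ℝ)
    (ht : ∀ j, t j ∈ Ioc 0 s) :
    ∑ j, (1 - t j) / √(t j) ≤
      (1 - (∏ j, t j) / s ^ n) / √((∏ j, t j) / s ^ n) + n * ((1 - s) / √s) := by
  induction n with
  | zero => simp
  | succ n ih =>
    have htail : ∀ j : Fin (n + 1), t j.succ ∈ Ioc 0 s := fun j => ht j.succ
    have smooth := one_sub_div_sqrt_add_le hs (ht 0) (prod_div_pow_mem_Ioc _ htail)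
    rw [Fin.sum_univ_succ, prod_div_pow_succ]
    push_cast
    linarith [ih _ htail]

end Smoothing

/-- Extremal rearrangement: for λ > 0, s = λ/(1+λ), integer w ≥ 1 and
    t₁,…,t_w ∈ (0,s], with T = s^{−(w−1)}·∏ⱼtⱼ we have T ∈ (0,s] and
    Σⱼ(1−tⱼ)/√tⱼ ≤ (1−T)/√T + (w−1)(1−s)/√s. -/
theorem stmt_8 (lam : ℝ) (hlam : 0 < lam) (w : ℕ) (hw : 1 ≤ w)
    (t : Fin w → ℝ) (ht : ∀ j, t j ∈ Set.Ioc (0 : ℝ) (lam / (1 + lam)))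
    (T : ℝ) (hT : T = (∏ j, t j) / (lam / (1 + lam)) ^ (w - 1)) :
    T ∈ Set.Ioc (0 : ℝ) (lam / (1 + lam)) ∧
    ∑ j, (1 - t j) / Real.sqrt (t j) ≤
      (1 - T) / Real.sqrt T +
        ((w : ℝ) - 1) * (1 - lam / (1 + lam)) / Real.sqrt (lam / (1 + lam)) := by
  obtain ⟨n, rfl⟩ := Nat.exists_eq_add_of_le' hw
  have hs : lam / (1 + lam) ≤ 1 := (div_le_one (by linarith)).2 (by linarith)
  subst hT
  refine ⟨prod_div_pow_mem_Ioc t ht, ?_⟩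
  rw [Nat.add_sub_cancel, Nat.cast_add_one, add_sub_cancel_right, mul_div_assoc]
  exact sum_one_sub_div_sqrt_le hs t ht
end

section
/- Let Δ ≥ 2 be an integer, let λ > 0 satisfy λ·(Δ−2)^Δ < (Δ−1)^{Δ−1}, and let d < Δ be a positive integer. Then there exists a constant α < 1 (depending only on λ and Δ) such that for every z = (z₁,…,z_d) ∈ [0,1]^d, √( λ∏_{i=1}^d z_i / (1 + λ∏_{i=1}^d z_i) ) · Σ_{i=1}^d √(1 − z_i) ≤ α. -/
open Finset

/-- two-variable AM-GM: `a * b^n ≤ ((a + n*b)/(n+1))^(n+1)`. -/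
lemma amgm2 (a b : ℝ) (ha : 0 ≤ a) (hb : 0 ≤ b) (n : ℕ) :
    a * b ^ n ≤ ((a + n * b) / (n + 1)) ^ (n + 1) := by
  have hm : (0:ℝ) < (n:ℝ) + 1 := by positivity
  have hw : (1:ℝ)/((n:ℝ)+1) + (n:ℝ)/((n:ℝ)+1) = 1 := by field_simp; ring
  have h := Real.geom_mean_le_arith_mean2_weighted
    (by positivity : (0:ℝ) ≤ 1/((n:ℝ)+1)) (by positivity : (0:ℝ) ≤ (n:ℝ)/((n:ℝ)+1))
    ha hb hw
  -- h : a ^ (1/(n+1)) * b ^ (n/(n+1)) ≤ 1/(n+1) * a + n/(n+1) * b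
  have hL0 : (0:ℝ) ≤ a ^ ((1:ℝ)/((n:ℝ)+1)) * b ^ ((n:ℝ)/((n:ℝ)+1)) := by positivity
  have h2 := pow_le_pow_left₀ hL0 h (n+1)
  calc a * b ^ n
      = (a ^ ((1:ℝ)/((n:ℝ)+1)) * b ^ ((n:ℝ)/((n:ℝ)+1))) ^ (n+1) := by
        rw [← Real.rpow_natCast (_ * _) (n+1), Real.mul_rpow (by positivity) (by positivity),
          ← Real.rpow_mul ha, ← Real.rpow_mul hb]
        push_cast
        rw [one_div, inv_mul_cancel₀ hm.ne', div_mul_cancel₀ (n:ℝ) hm.ne',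
          Real.rpow_one, Real.rpow_natCast]
    _ ≤ ((1:ℝ)/((n:ℝ)+1) * a + (n:ℝ)/((n:ℝ)+1) * b) ^ (n+1) := h2
    _ = ((a + n * b) / (n + 1)) ^ (n + 1) := by ring_nf

/-- AM-GM for `d` numbers. -/
lemma amgm_fin {d : ℕ} (hd0 : 0 < d) (z : Fin d → ℝ) (hz : ∀ i, 0 ≤ z i) :
    ∏ i, z i ≤ ((∑ i, z i) / d) ^ d := by
  have hd' : (0:ℝ) < d := by exact_mod_cast hd0
  have h := Real.geom_mean_le_arith_mean_weighted univ (fun _ => (d:ℝ)⁻¹) z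
    (fun i _ => by positivity) (by simp [Finset.card_univ, mul_inv_cancel₀ hd'.ne']) 
    (fun i _ => hz i)
  have hprod : ∏ i, z i ^ ((d:ℝ)⁻¹) = (∏ i, z i) ^ ((d:ℝ)⁻¹) := by
    rw [← Real.finset_prod_rpow univ z (fun i _ => hz i)]
  rw [hprod] at h
  have hsum : ∑ i, (d:ℝ)⁻¹ * z i = (∑ i, z i) / d := by
    rw [← Finset.mul_sum]; ring
  rw [hsum] at h
  have hp0 : (0:ℝ) ≤ ∏ i, z i := Finset.prod_nonneg fun i _ => hz i
  have h2 := pow_le_pow_left₀ (by positivity) h d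
  calc ∏ i, z i = ((∏ i, z i) ^ ((d:ℝ)⁻¹)) ^ d := by
        rw [← Real.rpow_natCast ((∏ i, z i) ^ ((d:ℝ)⁻¹)) d, ← Real.rpow_mul hp0,
          inv_mul_cancel₀ hd'.ne', Real.rpow_one]
    _ ≤ ((∑ i, z i) / d) ^ d := h2

/-- the downward induction predicate. -/
lemma pred_step (lam : ℝ) (hlam : 0 < lam) (k : ℕ) (hk : 1 ≤ k)
    (h : lam * ((k:ℝ)) ^ (k+2) < ((k:ℝ)+1) ^ (k+1)) :
    lam * ((k:ℝ) - 1) ^ (k+1) < (k:ℝ) ^ k := by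
  rcases eq_or_lt_of_le hk with h1 | h2
  · subst_vars
    simp only [Nat.cast_one] at *
    norm_num
  · have hk2 : (2:ℝ) ≤ (k:ℝ) := by exact_mod_cast h2
    have hkpos : (0:ℝ) < (k:ℝ) := by linarith
    have hpow : (0:ℝ) < (k:ℝ) ^ (k+2) := by positivity
    refine lt_of_mul_lt_mul_right ?_ hpow.le
    have hk1 : (0:ℝ) < ((k:ℝ) - 1) ^ (k+1) := by
      apply pow_pos; linarith
    calc lam * ((k:ℝ) - 1) ^ (k+1) * (k:ℝ) ^ (k+2)
        = (lam * (k:ℝ) ^ (k+2)) * ((k:ℝ) - 1) ^ (k+1) := by ring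
      _ < ((k:ℝ)+1) ^ (k+1) * ((k:ℝ) - 1) ^ (k+1) := by
          exact mul_lt_mul_of_pos_right h hk1
      _ = (((k:ℝ)+1) * ((k:ℝ) - 1)) ^ (k+1) := by rw [mul_pow]
      _ = ((k:ℝ)^2 - 1) ^ (k+1) := by ring_nf
      _ ≤ ((k:ℝ)^2) ^ (k+1) := by
          apply pow_le_pow_left₀ (by nlinarith) (by linarith)
      _ = (k:ℝ) ^ k * (k:ℝ) ^ (k+2) := by rw [← pow_mul, ← pow_add]; ring_nf

/-- pointwise strict bound. -/
lemma key_lt (lam : ℝ) (hlam : 0 < lam) (d : ℕ) (hd0 : 0 < d)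
    (hP : lam * ((d:ℝ) - 1) ^ (d+1) < (d:ℝ) ^ d)
    (z : Fin d → ℝ) (hz : ∀ i, z i ∈ Set.Icc (0 : ℝ) 1) :
    Real.sqrt ((lam * ∏ i, z i) / (1 + lam * ∏ i, z i)) *
        ∑ i, Real.sqrt (1 - z i) < 1 := by
  have hd' : (0:ℝ) < d := by exact_mod_cast hd0
  set p : ℝ := ∏ i, z i with hp
  set S : ℝ := ∑ i, z i with hS
  have hp0 : 0 ≤ p := Finset.prod_nonneg fun i _ => (hz i).1
  have hS0 : 0 ≤ S := Finset.sum_nonneg fun i _ => (hz i).1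
  have hD : (0:ℝ) < 1 + lam * p := by positivity
  set q : ℝ := (lam * p) / (1 + lam * p) with hq
  have hq0 : 0 ≤ q := by positivity
  set T : ℝ := ∑ i, Real.sqrt (1 - z i) with hT
  have hT0 : 0 ≤ T := Finset.sum_nonneg fun i _ => Real.sqrt_nonneg _
  have hT2 : T ^ 2 ≤ d * (d - S) := by
    have h1 : T ^ 2 ≤ (Finset.univ.card : ℝ) * ∑ i, Real.sqrt (1 - z i) ^ 2 :=
      sq_sum_le_card_mul_sum_sq
    have h2 : ∀ i : Fin d, Real.sqrt (1 - z i) ^ 2 = 1 - z i := by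
      intro i; exact Real.sq_sqrt (by linarith [(hz i).2])
    have h3 : ∑ i, Real.sqrt (1 - z i) ^ 2 = (d:ℝ) - S := by
      simp only [h2]
      rw [Finset.sum_sub_distrib, Finset.sum_const, Finset.card_univ, Fintype.card_fin]
      simp [hS]
    rw [h3, Finset.card_univ, Fintype.card_fin] at h1
    exact h1
  -- main inequality : q * (d * (d - S)) < 1
  have hmain : q * ((d:ℝ) * ((d:ℝ) - S)) < 1 := by
    rw [hq, div_mul_eq_mul_div, div_lt_one hD]
    have hkey : lam * p * ((d:ℝ) * ((d:ℝ) - S) - 1) < 1 := by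
      set A : ℝ := (d:ℝ) * ((d:ℝ) - S) - 1 with hA
      rcases le_or_gt A 0 with hA0 | hA0
      · calc lam * p * A ≤ 0 := mul_nonpos_of_nonneg_of_nonpos (by positivity) hA0
          _ < 1 := one_pos
      · have hpS : p ≤ (S / d) ^ d := amgm_fin hd0 z fun i => (hz i).1
        have hASd : A * S ^ d ≤ ((d:ℝ) - 1) ^ (d + 1) := by
          have h := amgm2 A S hA0.le hS0 d
          have hAd : (A + (d:ℝ) * S) / ((d:ℝ) + 1) = (d:ℝ) - 1 := by
            rw [div_eq_iff (by positivity)]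
            rw [hA]; ring
          rwa [hAd] at h
        calc lam * p * A ≤ lam * ((S / d) ^ d) * A := by
              apply mul_le_mul_of_nonneg_right _ hA0.le
              exact mul_le_mul_of_nonneg_left hpS hlam.le
          _ = lam * (A * S ^ d) / (d:ℝ) ^ d := by
              rw [div_pow]; ring
          _ ≤ lam * (((d:ℝ) - 1) ^ (d + 1)) / (d:ℝ) ^ d := by
              apply div_le_div_of_nonneg_right _ (by positivity)
              · exact mul_le_mul_of_nonneg_left hASd hlam.le
          _ < 1 := by
              rw [div_lt_one (by positivity)]; exact hP
    nlinarith [hkey]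
  have hG0 : 0 ≤ Real.sqrt q * T := mul_nonneg (Real.sqrt_nonneg _) hT0
  have hG2 : (Real.sqrt q * T) ^ 2 < 1 := by
    have : (Real.sqrt q * T) ^ 2 = q * T ^ 2 := by
      rw [mul_pow, Real.sq_sqrt hq0]
    rw [this]
    calc q * T ^ 2 ≤ q * ((d:ℝ) * ((d:ℝ) - S)) := mul_le_mul_of_nonneg_left hT2 hq0
      _ < 1 := hmain
  have h12 : (Real.sqrt q * T) ^ 2 < 1 ^ 2 := by rwa [one_pow]
  exact lt_of_pow_lt_pow_left₀ 2 zero_le_one h12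

lemma pred_of_crit (Δ : ℕ) (hΔ : 2 ≤ Δ) (lam : ℝ) (hlam : 0 < lam)
    (hcrit : lam * ((Δ : ℝ) - 2) ^ Δ < ((Δ : ℝ) - 1) ^ (Δ - 1))
    (d : ℕ) (hd0 : 0 < d) (hd : d < Δ) :
    lam * ((d:ℝ) - 1) ^ (d + 1) < (d:ℝ) ^ d := by
  set P : ℕ → Prop := fun k => lam * ((k:ℝ) - 1) ^ (k+1) < (k:ℝ) ^ k with hPdef
  have step' : ∀ k, 1 ≤ k → P (k+1) → P k := by
    intro k hk h
    apply pred_step lam hlam k hk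
    simp only [hPdef] at h
    push_cast at h
    have he : (k:ℝ) + 1 - 1 = (k:ℝ) := by ring
    rw [he] at h
    convert h using 2 <;> omega
  have down : ∀ j k, 1 ≤ k → P (k + j) → P k := by
    intro j
    induction j with
    | zero => intro k hk h; simpa using h
    | succ j ih =>
      intro k hk h
      apply step' k hk
      apply ih (k+1) (by omega)
      have : k + 1 + j = k + (j + 1) := by omega
      rwa [this]
  have hcrit' : P (Δ - 1) := by
    simp only [hPdef]
    have h1 : Δ - 1 + 1 = Δ := by omega
    have h2 : ((Δ - 1 : ℕ) : ℝ) = (Δ : ℝ) - 1 := by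
      push_cast [Nat.cast_sub (by omega : 1 ≤ Δ)]; ring
    rw [h1, h2]
    have h3 : (Δ:ℝ) - 1 - 1 = (Δ:ℝ) - 2 := by ring
    rw [h3]
    exact hcrit
  have hfin := down (Δ - 1 - d) d hd0 (by rwa [show d + (Δ - 1 - d) = Δ - 1 by omega])
  exact hfin

/-- For Δ ≥ 2, λ > 0 with λ(Δ−2)^Δ < (Δ−1)^{Δ−1}, and a positive integer d < Δ,
    there is α < 1 such that for every z ∈ [0,1]^d,
    √(λ∏zᵢ/(1+λ∏zᵢ))·Σᵢ√(1−zᵢ) ≤ α. -/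
theorem stmt_9 (Δ : ℕ) (hΔ : 2 ≤ Δ) (lam : ℝ) (hlam : 0 < lam)
    (hcrit : lam * ((Δ : ℝ) - 2) ^ Δ < ((Δ : ℝ) - 1) ^ (Δ - 1))
    (d : ℕ) (hd0 : 0 < d) (hd : d < Δ) :
    ∃ α : ℝ, α < 1 ∧
      ∀ z : Fin d → ℝ, (∀ i, z i ∈ Set.Icc (0 : ℝ) 1) →
        Real.sqrt ((lam * ∏ i, z i) / (1 + lam * ∏ i, z i)) *
            ∑ i, Real.sqrt (1 - z i) ≤ α := by
  have hPd := pred_of_crit Δ hΔ lam hlam hcrit d hd0 hd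
  set G : (Fin d → ℝ) → ℝ := fun z =>
    Real.sqrt ((lam * ∏ i, z i) / (1 + lam * ∏ i, z i)) * ∑ i, Real.sqrt (1 - z i)
    with hG
  set K : Set (Fin d → ℝ) := Set.univ.pi fun _ => Set.Icc (0:ℝ) 1 with hKdef
  have hK : IsCompact K := isCompact_univ_pi fun _ => isCompact_Icc
  have hne : K.Nonempty := ⟨fun _ => 0, fun i _ => ⟨le_refl 0, zero_le_one⟩⟩
  have hprodc : Continuous fun z : Fin d → ℝ => lam * ∏ i, z i :=
    continuous_const.mul (continuous_finset_prod _ fun i _ => continuous_apply i)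
  have hdenc : Continuous fun z : Fin d → ℝ => 1 + lam * ∏ i, z i :=
    continuous_const.add hprodc
  have hsumc : Continuous fun z : Fin d → ℝ => ∑ i, Real.sqrt (1 - z i) :=
    continuous_finset_sum _ fun i _ =>
      Real.continuous_sqrt.comp (continuous_const.sub (continuous_apply i))
  have hcont : ContinuousOn G K := by
    apply ContinuousOn.mul _ hsumc.continuousOn
    apply Real.continuous_sqrt.comp_continuousOn
    apply ContinuousOn.div hprodc.continuousOn hdenc.continuousOn
    intro z hzK
    have hmem : ∀ i, z i ∈ Set.Icc (0:ℝ) 1 := fun i => hzK i (Set.mem_univ i)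
    have hp0 : 0 ≤ ∏ i, z i := Finset.prod_nonneg fun i _ => (hmem i).1
    have : 0 ≤ lam * ∏ i, z i := mul_nonneg hlam.le hp0
    intro hc; linarith
  obtain ⟨z₀, hz₀, hmax'⟩ := hK.exists_isMaxOn hne hcont
  have hmax : ∀ z ∈ K, G z ≤ G z₀ := fun z hz => hmax' hz
  have hz₀' : ∀ i, z₀ i ∈ Set.Icc (0:ℝ) 1 := fun i => hz₀ i (Set.mem_univ i)
  refine ⟨G z₀, key_lt lam hlam d hd0 hPd z₀ hz₀', fun z hzI => hmax z ?_⟩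
  exact fun i _ => hzI i
end

section
/- Let λ > 0, let d ≥ 1 be an integer, and let z₁, …, z_d ∈ [0,1]. Set z = (∏_{i=1}^d z_i)^{1/d}. Then √( λ∏_{i=1}^d z_i / (1 + λ∏_{i=1}^d z_i) ) · Σ_{i=1}^d √(1 − z_i) ≤ d · √( λ z^d (1 − z) / (1 + λ z^d) ). -/
/-- Jensen/symmetrization step: for λ > 0, d ≥ 1 and z₁,…,z_d ∈ [0,1], with
    z = (∏zᵢ)^{1/d},
    √(λ∏zᵢ/(1+λ∏zᵢ))·Σᵢ√(1−zᵢ) ≤ d·√(λz^d(1−z)/(1+λz^d)). -/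
theorem stmt_10 (lam : ℝ) (hlam : 0 < lam) (d : ℕ) (hd : 1 ≤ d)
    (z : Fin d → ℝ) (hz : ∀ i, z i ∈ Set.Icc (0 : ℝ) 1)
    (zg : ℝ) (hzg : zg = (∏ i, z i) ^ ((1 : ℝ) / d)) :
    Real.sqrt ((lam * ∏ i, z i) / (1 + lam * ∏ i, z i)) * ∑ i, Real.sqrt (1 - z i) ≤
      (d : ℝ) * Real.sqrt (lam * zg ^ d * (1 - zg) / (1 + lam * zg ^ d)) := by
  have hd0 : (d : ℝ) ≠ 0 := Nat.cast_ne_zero.mpr (by omega)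
  have hdpos : (0:ℝ) < d := by positivity
  set P : ℝ := ∏ i, z i with hP
  have hP0 : 0 ≤ P := Finset.prod_nonneg fun i _ => (hz i).1
  have hP1 : P ≤ 1 := Finset.prod_le_one (fun i _ => (hz i).1) (fun i _ => (hz i).2)
  have hzg0 : 0 ≤ zg := hzg ▸ Real.rpow_nonneg hP0 _
  have hzg1 : zg ≤ 1 := hzg ▸ Real.rpow_le_one hP0 hP1 (by positivity)
  have hzgd : zg ^ d = P := by
    rw [hzg, ← Real.rpow_natCast (P ^ ((1:ℝ)/d)) d, ← Real.rpow_mul hP0,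
      one_div_mul_cancel hd0, Real.rpow_one]
  -- AM-GM: zg ≤ (∑ z i)/d
  have hamgm : (d : ℝ) * zg ≤ ∑ i, z i := by
    have h := Real.geom_mean_le_arith_mean_weighted Finset.univ (fun _ : Fin d => 1/d) z
      (fun i _ => by positivity) (by simp [Finset.sum_const, Finset.card_univ]; field_simp)
      (fun i _ => (hz i).1)
    have hprod : ∏ i, (z i) ^ ((1:ℝ)/d) = zg := by
      rw [hzg, ← Real.finset_prod_rpow _ _ (fun i _ => (hz i).1)]
    rw [hprod] at h
    calc (d:ℝ) * zg ≤ (d:ℝ) * ∑ i, (1/d) * z i := by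
          exact mul_le_mul_of_nonneg_left h hdpos.le
      _ = ∑ i, z i := by
          rw [Finset.mul_sum]; congr 1; ext i; field_simp
  -- Cauchy-Schwarz step
  have hkey : ∑ i, Real.sqrt (1 - z i) ≤ (d:ℝ) * Real.sqrt (1 - zg) := by
    have hS0 : 0 ≤ ∑ i, Real.sqrt (1 - z i) :=
      Finset.sum_nonneg fun i _ => Real.sqrt_nonneg _
    have hsq : (∑ i, Real.sqrt (1 - z i))^2 ≤ (d:ℝ)^2 * (1 - zg) := by
      calc (∑ i, Real.sqrt (1 - z i))^2
          ≤ (Finset.univ.card : ℝ) * ∑ i, (Real.sqrt (1 - z i))^2 :=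
            sq_sum_le_card_mul_sum_sq
        _ = (d:ℝ) * ∑ i, (1 - z i) := by
            rw [Finset.card_univ, Fintype.card_fin]
            congr 1
            exact Finset.sum_congr rfl fun i _ =>
              Real.sq_sqrt (by linarith [(hz i).2])
        _ = (d:ℝ) * ((d:ℝ) - ∑ i, z i) := by
            rw [Finset.sum_sub_distrib]; simp
        _ ≤ (d:ℝ) * ((d:ℝ) - (d:ℝ) * zg) := by nlinarith
        _ = (d:ℝ)^2 * (1 - zg) := by ring
    have h2 := Real.sqrt_le_sqrt hsq
    rwa [Real.sqrt_sq hS0, Real.sqrt_mul (by positivity) _, Real.sqrt_sq hdpos.le] at h2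
  have hC0 : 0 ≤ (lam * P) / (1 + lam * P) := by positivity
  calc Real.sqrt ((lam * P) / (1 + lam * P)) * ∑ i, Real.sqrt (1 - z i)
      ≤ Real.sqrt ((lam * P) / (1 + lam * P)) * ((d:ℝ) * Real.sqrt (1 - zg)) :=
        mul_le_mul_of_nonneg_left hkey (Real.sqrt_nonneg _)
    _ = (d:ℝ) * (Real.sqrt ((lam * P) / (1 + lam * P)) * Real.sqrt (1 - zg)) := by ring
    _ = (d:ℝ) * Real.sqrt (lam * zg ^ d * (1 - zg) / (1 + lam * zg ^ d)) := by
        rw [← Real.sqrt_mul hC0, hzgd]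
        congr 2
        ring
end

section
/- Let d ≥ 2 be an integer and let λ'_c = d^d/(d−1)^{d+1}. Define g(z) = λ'_c z^d (1−z)/(1 + λ'_c z^d) for z ∈ [0,1] and let ẑ = (d−1)/d. Then g attains its maximum over [0,1] at z = ẑ, and d² · g(ẑ) = d² λ'_c ẑ^d (1−ẑ)/(1 + λ'_c ẑ^d) = 1. -/
lemma stmt11_key_id (n : ℕ) (t : ℝ) :
    1 + (n : ℝ) * t ^ (n + 1) - ((n : ℝ) + 1) * t ^ n
      = (1 - t) ^ 2 * ∑ k ∈ Finset.range n, ((k : ℝ) + 1) * t ^ k := by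
  induction n with
  | zero => simp
  | succ n ih =>
    rw [Finset.sum_range_succ, Nat.cast_succ]
    ring_nf
    ring_nf at ih
    linear_combination ih

lemma stmt11_key_ineq (n : ℕ) (t : ℝ) (ht : 0 ≤ t) :
    ((n : ℝ) + 1) * t ^ n ≤ 1 + (n : ℝ) * t ^ (n + 1) := by
  have h := stmt11_key_id n t
  have hs : 0 ≤ (1 - t) ^ 2 * ∑ k ∈ Finset.range n, ((k : ℝ) + 1) * t ^ k := by
    apply mul_nonneg (sq_nonneg _)
    exact Finset.sum_nonneg fun k _ => by positivity
  linarith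

lemma stmt11_key_hom (n : ℕ) (a b : ℝ) (ha : 0 ≤ a) (hb : 0 < b) :
    ((n : ℝ) + 1) * a ^ n * b ≤ b ^ (n + 1) + (n : ℝ) * a ^ (n + 1) := by
  have h := stmt11_key_ineq n (a / b) (div_nonneg ha hb.le)
  rw [div_pow, div_pow] at h
  have hbn : 0 < b ^ (n + 1) := pow_pos hb _
  have h2 := mul_le_mul_of_nonneg_right h hbn.le
  have hb0 : b ≠ 0 := hb.ne'
  calc ((n : ℝ) + 1) * a ^ n * b = (((n:ℝ)+1) * (a ^ n / b ^ n)) * b ^ (n+1) := by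
        field_simp
        try ring
    _ ≤ (1 + (n:ℝ) * (a ^ (n+1) / b ^ (n+1))) * b ^ (n+1) := h2
    _ = b ^ (n + 1) + (n : ℝ) * a ^ (n + 1) := by
        field_simp
        try ring

/-- For d ≥ 2 and λ'_c = d^d/(d−1)^{d+1}, the function
    g(z) = λ'_c z^d(1−z)/(1+λ'_c z^d) attains its maximum over [0,1] at
    ẑ = (d−1)/d, and d²·g(ẑ) = 1. -/
theorem stmt_11 (d : ℕ) (hd : 2 ≤ d)
    (lc : ℝ) (hlc : lc = (d : ℝ) ^ d / ((d : ℝ) - 1) ^ (d + 1))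
    (g : ℝ → ℝ) (hg : g = fun z => lc * z ^ d * (1 - z) / (1 + lc * z ^ d))
    (zhat : ℝ) (hzhat : zhat = ((d : ℝ) - 1) / d) :
    (∀ z ∈ Set.Icc (0 : ℝ) 1, g z ≤ g zhat) ∧ (d : ℝ) ^ 2 * g zhat = 1 := by
  have hd2 : (2 : ℝ) ≤ (d : ℝ) := by exact_mod_cast hd
  have hdpos : (0 : ℝ) < (d : ℝ) := by linarith
  have hd1 : (0 : ℝ) < (d : ℝ) - 1 := by linarith
  have hB : (0 : ℝ) < ((d : ℝ) - 1) ^ (d + 1) := pow_pos hd1 _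
  have hdd : (0 : ℝ) < (d : ℝ) ^ d := pow_pos hdpos _
  have hlcpos : 0 < lc := by rw [hlc]; positivity
  have hzd : lc * zhat ^ d = 1 / ((d : ℝ) - 1) := by
    rw [hlc, hzhat, div_pow, pow_succ]
    field_simp
  have hghat : g zhat = 1 / (d : ℝ) ^ 2 := by
    rw [hg]
    simp only
    rw [hzd, hzhat]
    rw [div_eq_div_iff (by positivity) (by positivity)]
    field_simp
    ring
  constructor
  · intro z hz
    rw [hghat, hg]
    simp only
    have hden : 0 < 1 + lc * z ^ d := by
      have : 0 ≤ lc * z ^ d := mul_nonneg hlcpos.le (pow_nonneg hz.1 d)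
      linarith
    rw [div_le_div_iff₀ hden (by positivity : (0:ℝ) < (d:ℝ)^2)]
    have h2 := stmt11_key_hom d ((d : ℝ) * z) ((d : ℝ) - 1)
      (mul_nonneg hdpos.le hz.1) hd1
    simp only [mul_pow, pow_succ] at h2
    rw [hlc, ← sub_nonneg]
    have heq : 1 * (1 + (d:ℝ)^d / ((d:ℝ)-1)^(d+1) * z^d)
        - (d:ℝ)^d / ((d:ℝ)-1)^(d+1) * z^d * (1-z) * (d:ℝ)^2
        = ((((d:ℝ)-1)^d * ((d:ℝ)-1) + (d:ℝ)^d * z^d)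
            - (d:ℝ)^d * z^d * (1-z) * (d:ℝ)^2) / (((d:ℝ)-1)^d * ((d:ℝ)-1)) := by
      rw [pow_succ]
      field_simp
      try ring
    rw [heq]
    apply div_nonneg _ (by positivity)
    nlinarith [h2]
  · rw [hghat]
    field_simp
end

section
/- For every integer Δ ≥ 3 and every z ∈ [0,1], it holds that Δ²(Δ−1)^{Δ−1} z^Δ (1−z) / ( (Δ−2)^Δ + (Δ−1)^{Δ−1} z^Δ ) < 9. -/
private lemma quad_binom (n : ℕ) (u : ℝ) (hu : 0 ≤ u) :
    1 + n * u + n * ((n : ℝ) - 1) / 2 * u ^ 2 ≤ (1 + u) ^ n := by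
  induction n with
  | zero => norm_num
  | succ n ih =>
    have h1 : (0:ℝ) ≤ 1 + u := by linarith
    have h2 : (0:ℝ) ≤ (n:ℝ) := Nat.cast_nonneg n
    have h3 : (0:ℝ) ≤ (n:ℝ) * ((n:ℝ) - 1) := by
      rcases Nat.eq_zero_or_pos n with h | h
      · subst h; norm_num
      · have : (1:ℝ) ≤ (n:ℝ) := by exact_mod_cast h
        nlinarith
    have key : (1 + n * u + n * ((n : ℝ) - 1) / 2 * u ^ 2) * (1 + u) ≤ (1 + u) ^ (n + 1) := by
      rw [pow_succ]
      exact mul_le_mul_of_nonneg_right ih h1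
    refine le_trans ?_ key
    push_cast
    nlinarith [mul_nonneg h3 (mul_nonneg (mul_nonneg hu hu) hu), mul_nonneg h2 (mul_nonneg hu hu)]

private lemma pow_ratio (Δ : ℕ) (hΔ : 4 ≤ Δ) :
    ((Δ : ℝ) - 1) ^ (Δ - 1) ≤ Real.exp 2 * ((Δ : ℝ) - 2) ^ (Δ - 1) := by
  have hd4 : (4:ℝ) ≤ (Δ:ℝ) := by exact_mod_cast hΔ
  have hncast : ((Δ - 1 : ℕ) : ℝ) = (Δ:ℝ) - 1 := by
    push_cast [Nat.cast_sub (by omega : 1 ≤ Δ)]; ring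
  have h5 : (0:ℝ) < (Δ:ℝ) - 1 := by linarith
  have hne : ((Δ:ℝ) - 1) ≠ 0 := ne_of_gt h5
  have hstep : (Δ:ℝ) - 1 ≤ ((Δ:ℝ) - 2) * Real.exp (2 / ((Δ:ℝ) - 1)) := by
    have hb : 1 + 2 / ((Δ:ℝ) - 1) ≤ Real.exp (2 / ((Δ:ℝ) - 1)) := by
      have := Real.add_one_le_exp (2 / ((Δ:ℝ) - 1)); linarith
    have h2 : ((Δ:ℝ) - 2) * (1 + 2 / ((Δ:ℝ) - 1)) ≤
        ((Δ:ℝ) - 2) * Real.exp (2 / ((Δ:ℝ) - 1)) :=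
      mul_le_mul_of_nonneg_left hb (by linarith)
    refine le_trans ?_ h2
    have heq : ((Δ:ℝ) - 2) * (1 + 2 / ((Δ:ℝ) - 1))
        = (((Δ:ℝ) - 2) * ((Δ:ℝ) - 1) + 2 * ((Δ:ℝ) - 2)) / ((Δ:ℝ) - 1) := by
      field_simp
    rw [heq, le_div_iff₀ h5]
    nlinarith
  have hpow : ((Δ:ℝ) - 1) ^ (Δ - 1) ≤ (((Δ:ℝ) - 2) * Real.exp (2 / ((Δ:ℝ) - 1))) ^ (Δ - 1) :=
    pow_le_pow_left₀ (by linarith) hstep _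
  have hexppow : Real.exp (2 / ((Δ:ℝ) - 1)) ^ (Δ - 1) = Real.exp 2 := by
    rw [← Real.exp_nat_mul, hncast]
    congr 1
    field_simp
  calc ((Δ:ℝ) - 1) ^ (Δ - 1)
      ≤ (((Δ:ℝ) - 2) * Real.exp (2 / ((Δ:ℝ) - 1))) ^ (Δ - 1) := hpow
    _ = ((Δ:ℝ) - 2) ^ (Δ - 1) * Real.exp (2 / ((Δ:ℝ) - 1)) ^ (Δ - 1) := mul_pow _ _ _
    _ = Real.exp 2 * ((Δ:ℝ) - 2) ^ (Δ - 1) := by rw [hexppow, mul_comm]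

private lemma exp_two_lt : Real.exp 2 < 7.4 := by
  have h1 : Real.exp 1 < 2.7182818286 := Real.exp_one_lt_d9
  have h0 : (0:ℝ) < Real.exp 1 := Real.exp_pos 1
  have h2 : Real.exp 2 = Real.exp 1 * Real.exp 1 := by
    rw [← Real.exp_add]; norm_num
  rw [h2]; nlinarith

set_option maxHeartbeats 1600000 in
/-- For every integer Δ ≥ 3 and every z ∈ [0,1],
    Δ²(Δ−1)^{Δ−1} z^Δ (1−z) / ((Δ−2)^Δ + (Δ−1)^{Δ−1} z^Δ) < 9. -/
theorem stmt_12 (Δ : ℕ) (hΔ : 3 ≤ Δ) (z : ℝ) (hz : z ∈ Set.Icc (0 : ℝ) 1) :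
    (Δ : ℝ) ^ 2 * ((Δ : ℝ) - 1) ^ (Δ - 1) * z ^ Δ * (1 - z) /
        (((Δ : ℝ) - 2) ^ Δ + ((Δ : ℝ) - 1) ^ (Δ - 1) * z ^ Δ) < 9 := by
  obtain ⟨hz0, hz1⟩ := hz
  rcases eq_or_lt_of_le hΔ with hΔ3 | hΔ4
  · -- Δ = 3
    subst hΔ3
    norm_num
    have hz3 : (0:ℝ) ≤ z ^ 3 := pow_nonneg hz0 3
    have hD : (0:ℝ) < 1 + 4 * z ^ 3 := by linarith
    rw [div_lt_iff₀ hD]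
    nlinarith [pow_nonneg hz0 4]
  · have hΔ4 : 4 ≤ Δ := hΔ4
    have hd4 : (4:ℝ) ≤ (Δ:ℝ) := by exact_mod_cast hΔ4
    have hB : (0:ℝ) < ((Δ:ℝ) - 2) ^ Δ := pow_pos (by linarith) Δ
    have hA : (0:ℝ) ≤ ((Δ:ℝ) - 1) ^ (Δ - 1) * z ^ Δ :=
      mul_nonneg (pow_nonneg (by linarith) _) (pow_nonneg hz0 _)
    have hD : (0:ℝ) < ((Δ:ℝ) - 2) ^ Δ + ((Δ:ℝ) - 1) ^ (Δ - 1) * z ^ Δ := by linarith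
    rw [div_lt_iff₀ hD]
    rcases le_or_gt ((Δ:ℝ) ^ 2 * (1 - z)) 9 with hcase | hcase
    · -- small Δ²(1-z): numerator ≤ 9A < 9A + 9B
      have h1 : (Δ:ℝ) ^ 2 * ((Δ:ℝ) - 1) ^ (Δ - 1) * z ^ Δ * (1 - z)
          = ((Δ:ℝ) ^ 2 * (1 - z)) * (((Δ:ℝ) - 1) ^ (Δ - 1) * z ^ Δ) := by ring
      rw [h1]
      have h2 : ((Δ:ℝ) ^ 2 * (1 - z)) * (((Δ:ℝ) - 1) ^ (Δ - 1) * z ^ Δ) ≤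
          9 * (((Δ:ℝ) - 1) ^ (Δ - 1) * z ^ Δ) := mul_le_mul_of_nonneg_right hcase hA
      nlinarith
    · -- Δ²(1-z) > 9
      set u : ℝ := 1 - z with hu
      have hupos : 0 < u := by nlinarith [sq_nonneg (Δ:ℝ)]
      have hu1 : u ≤ 1 := by rw [hu]; linarith
      rcases eq_or_lt_of_le hz0 with hz0' | hzpos
      · -- z = 0
        rw [← hz0']
        rw [zero_pow (by omega : Δ ≠ 0)]
        nlinarith
      · -- z > 0
        have hApos : 0 < ((Δ:ℝ) - 1) ^ (Δ - 1) * z ^ Δ :=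
          mul_pos (pow_pos (by linarith) _) (pow_pos hzpos _)
        have hrec : z ^ Δ * (1 + u) ^ Δ ≤ 1 := by
          rw [← mul_pow]
          refine pow_le_one₀ (mul_nonneg hz0 (by linarith)) ?_
          nlinarith [sq_nonneg u]
        have hbin : 1 + (Δ:ℝ) * u + (Δ:ℝ) * ((Δ:ℝ) - 1) / 2 * u ^ 2 ≤ (1 + u) ^ Δ :=
          quad_binom Δ u (le_of_lt hupos)
        have hexp : Real.exp 2 * ((Δ:ℝ) ^ 2 * u) ≤
            9 * ((Δ:ℝ) - 2) * (1 + (Δ:ℝ) * u + (Δ:ℝ) * ((Δ:ℝ) - 1) / 2 * u ^ 2) := by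
          have he := exp_two_lt
          have hdu : (0:ℝ) ≤ (Δ:ℝ) ^ 2 * u := mul_nonneg (by positivity) hupos.le
          have h74 : 7.4 * ((Δ:ℝ) ^ 2 * u) ≤
              9 * ((Δ:ℝ) - 2) * (1 + (Δ:ℝ) * u + (Δ:ℝ) * ((Δ:ℝ) - 1) / 2 * u ^ 2) := by
            have t1 : (0:ℝ) ≤ (Δ:ℝ) *
                (13.5 * ((Δ:ℝ) - 2) * ((Δ:ℝ) * u) + 3.2 * (Δ:ℝ) - 36) ^ 2 :=
              mul_nonneg (by linarith) (sq_nonneg _)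
            have t2 : (0:ℝ) ≤ (Δ:ℝ) * ((18.8 * (Δ:ℝ) - 8) * (25.2 * (Δ:ℝ) - 80)) :=
              mul_nonneg (by linarith)
                (mul_nonneg (by linarith) (by linarith))
            have t3 : (0:ℝ) ≤ (Δ:ℝ) * ((Δ:ℝ) - 2) ^ 2 :=
              mul_nonneg (by linarith) (sq_nonneg _)
            have t4 : (0:ℝ) ≤ ((Δ:ℝ) - 2) ^ 2 * (0.25 * (Δ:ℝ) - 1) * ((Δ:ℝ) * u) ^ 2 :=
              mul_nonneg (mul_nonneg (sq_nonneg _) (by linarith)) (sq_nonneg _)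
            have h54 : (0:ℝ) < 54 * (Δ:ℝ) * ((Δ:ℝ) - 2) := by nlinarith
            have hid : (54 * (Δ:ℝ) * ((Δ:ℝ) - 2)) *
                (9 * ((Δ:ℝ) - 2) * (1 + (Δ:ℝ) * u + (Δ:ℝ) * ((Δ:ℝ) - 1) / 2 * u ^ 2)
                  - 7.4 * ((Δ:ℝ) ^ 2 * u))
                = (Δ:ℝ) * (13.5 * ((Δ:ℝ) - 2) * ((Δ:ℝ) * u) + 3.2 * (Δ:ℝ) - 36) ^ 2
                + (Δ:ℝ) * ((18.8 * (Δ:ℝ) - 8) * (25.2 * (Δ:ℝ) - 80))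
                + 2 * ((Δ:ℝ) * ((Δ:ℝ) - 2) ^ 2)
                + 243 * (((Δ:ℝ) - 2) ^ 2 * (0.25 * (Δ:ℝ) - 1) * ((Δ:ℝ) * u) ^ 2) := by
              ring
            have hprod : (0:ℝ) ≤ (54 * (Δ:ℝ) * ((Δ:ℝ) - 2)) *
                (9 * ((Δ:ℝ) - 2) * (1 + (Δ:ℝ) * u + (Δ:ℝ) * ((Δ:ℝ) - 1) / 2 * u ^ 2)
                  - 7.4 * ((Δ:ℝ) ^ 2 * u)) := by
              rw [hid]; linarith
            have := (mul_nonneg_iff_of_pos_left h54).mp hprod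
            linarith
          calc Real.exp 2 * ((Δ:ℝ) ^ 2 * u) ≤ 7.4 * ((Δ:ℝ) ^ 2 * u) :=
                mul_le_mul_of_nonneg_right he.le hdu
            _ ≤ _ := h74
        have hratio := pow_ratio Δ hΔ4
        have hchain : (Δ:ℝ) ^ 2 * u * ((Δ:ℝ) - 1) ^ (Δ - 1)
            ≤ 9 * ((Δ:ℝ) - 2) ^ Δ * (1 + u) ^ Δ := by
          have s1 : (Δ:ℝ) ^ 2 * u * ((Δ:ℝ) - 1) ^ (Δ - 1)
              ≤ (Δ:ℝ) ^ 2 * u * (Real.exp 2 * ((Δ:ℝ) - 2) ^ (Δ - 1)) :=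
            mul_le_mul_of_nonneg_left hratio (by positivity)
          have s2 : Real.exp 2 * ((Δ:ℝ) ^ 2 * u) ≤ 9 * ((Δ:ℝ) - 2) * (1 + u) ^ Δ :=
            le_trans hexp (mul_le_mul_of_nonneg_left hbin (by linarith))
          have hpow2 : (0:ℝ) ≤ ((Δ:ℝ) - 2) ^ (Δ - 1) := pow_nonneg (by linarith) _
          have s4 : (Real.exp 2 * ((Δ:ℝ) ^ 2 * u)) * ((Δ:ℝ) - 2) ^ (Δ - 1)
              ≤ (9 * ((Δ:ℝ) - 2) * (1 + u) ^ Δ) * ((Δ:ℝ) - 2) ^ (Δ - 1) :=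
            mul_le_mul_of_nonneg_right s2 hpow2
          have s6 : ((Δ:ℝ) - 2) * ((Δ:ℝ) - 2) ^ (Δ - 1) = ((Δ:ℝ) - 2) ^ Δ := by
            calc ((Δ:ℝ) - 2) * ((Δ:ℝ) - 2) ^ (Δ - 1)
                = ((Δ:ℝ) - 2) ^ ((Δ - 1) + 1) := (pow_succ' _ _).symm
              _ = ((Δ:ℝ) - 2) ^ Δ := by congr 1; omega
          calc (Δ:ℝ) ^ 2 * u * ((Δ:ℝ) - 1) ^ (Δ - 1)
              ≤ (Δ:ℝ) ^ 2 * u * (Real.exp 2 * ((Δ:ℝ) - 2) ^ (Δ - 1)) := s1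
            _ = (Real.exp 2 * ((Δ:ℝ) ^ 2 * u)) * ((Δ:ℝ) - 2) ^ (Δ - 1) := by ring
            _ ≤ (9 * ((Δ:ℝ) - 2) * (1 + u) ^ Δ) * ((Δ:ℝ) - 2) ^ (Δ - 1) := s4
            _ = 9 * (((Δ:ℝ) - 2) * ((Δ:ℝ) - 2) ^ (Δ - 1)) * (1 + u) ^ Δ := by ring
            _ = 9 * ((Δ:ℝ) - 2) ^ Δ * (1 + u) ^ Δ := by rw [s6]
        have hopos : (0:ℝ) < (1 + u) ^ Δ := pow_pos (by linarith) Δ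
        have hnum : (Δ:ℝ) ^ 2 * ((Δ:ℝ) - 1) ^ (Δ - 1) * z ^ Δ * (1 - z)
            ≤ 9 * ((Δ:ℝ) - 2) ^ Δ := by
          have hmul : ((Δ:ℝ) ^ 2 * ((Δ:ℝ) - 1) ^ (Δ - 1) * z ^ Δ * (1 - z)) * (1 + u) ^ Δ
              ≤ (9 * ((Δ:ℝ) - 2) ^ Δ) * (1 + u) ^ Δ := by
            have hcoef : (0:ℝ) ≤ (Δ:ℝ) ^ 2 * u * ((Δ:ℝ) - 1) ^ (Δ - 1) :=
              mul_nonneg (mul_nonneg (by positivity) hupos.le) (pow_nonneg (by linarith) _)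
            calc ((Δ:ℝ) ^ 2 * ((Δ:ℝ) - 1) ^ (Δ - 1) * z ^ Δ * (1 - z)) * (1 + u) ^ Δ
                = ((Δ:ℝ) ^ 2 * u * ((Δ:ℝ) - 1) ^ (Δ - 1)) * (z ^ Δ * (1 + u) ^ Δ) := by
                  rw [hu]; ring
              _ ≤ ((Δ:ℝ) ^ 2 * u * ((Δ:ℝ) - 1) ^ (Δ - 1)) * 1 :=
                  mul_le_mul_of_nonneg_left hrec hcoef
              _ = (Δ:ℝ) ^ 2 * u * ((Δ:ℝ) - 1) ^ (Δ - 1) := mul_one _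
              _ ≤ (9 * ((Δ:ℝ) - 2) ^ Δ) * (1 + u) ^ Δ := hchain
          exact le_of_mul_le_mul_right hmul hopos
        nlinarith
end

section
/- Let Δ ≥ 2 be an integer, d ≤ Δ an integer, λ ∈ (0,1), β_c = 1 − 2/(2e^{−1/2}Δ + 3), and γ₁,…,γ_d, β₁,…,β_d ∈ [β_c, 1]. Let w₁,…,w_d be positive integers and let f(r) = λ ∏_{i=1}^d [ 1 − (1−γ_i)·(r⁰_{i1}/(1+r⁰_{i1}))·∏_{j=2}^{w_i} r¹_{ij}/(1+r¹_{ij}) ] / [ 1 − (1−β_i)·(1/(1+r⁰_{i1}))·∏_{j=2}^{w_i} 1/(1+r⁰_{ij}) ] be a function of the (Σ_i (2w_i − 1)) variables r⁰_{ij} (1 ≤ j ≤ w_i) and r¹_{ij} (2 ≤ j ≤ w_i). With Φ(x) = 1/x, there exist constants α < 1 and c > 0 depending on Δ (but not on the w_i) such that Σ_{i=1}^d w_i^c ( Σ_{j=1}^{w_i} (Φ(f(r))/Φ(r⁰_{ij}))·|∂f/∂r⁰_{ij}(r)| + Σ_{j=2}^{w_i} (Φ(f(r))/Φ(r¹_{ij}))·|∂f/∂r¹_{ij}(r)|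 ) ≤ α for every r with all coordinates in [λ β_c^Δ, λ β_c^{−Δ}]. -/
/-- The two-state spin recursion function on hypergraphs,
    f(r) = λ ∏_{i=1}^d [1 − (1−γᵢ)(r⁰ᵢ₁/(1+r⁰ᵢ₁))∏_{j=2}^{wᵢ} r¹ᵢⱼ/(1+r¹ᵢⱼ)]
                      / [1 − (1−βᵢ)(1/(1+r⁰ᵢ₁))∏_{j=2}^{wᵢ} 1/(1+r⁰ᵢⱼ)].
    Here `r0 i j` stands for r⁰_{i,j+1} and `r1 i j` for r¹_{i,j+1} (0-indexed),
    so `r0 i 0 = r⁰ᵢ₁` and the products over j = 2,…,wᵢ become products over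
    `j ∈ Finset.Ico 1 (w i)`. -/
noncomputable def spinF (lam : ℝ) {d : ℕ} (w : Fin d → ℕ) (be ga : Fin d → ℝ)
    (r0 r1 : Fin d → ℕ → ℝ) : ℝ :=
  lam * ∏ i : Fin d,
    (1 - (1 - ga i) * (r0 i 0 / (1 + r0 i 0)) *
        ∏ j ∈ Finset.Ico 1 (w i), r1 i j / (1 + r1 i j)) /
      (1 - (1 - be i) * (1 / (1 + r0 i 0)) *
        ∏ j ∈ Finset.Ico 1 (w i), 1 / (1 + r0 i j))

/-- The partial derivative ∂f/∂r⁰_{ij}. -/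
noncomputable def spinPD0 (lam : ℝ) {d : ℕ} (w : Fin d → ℕ) (be ga : Fin d → ℝ)
    (r0 r1 : Fin d → ℕ → ℝ) (i : Fin d) (j : ℕ) : ℝ :=
  deriv (fun t => spinF lam w be ga (Function.update r0 i (Function.update (r0 i) j t)) r1)
    (r0 i j)

/-- The partial derivative ∂f/∂r¹_{ij}. -/
noncomputable def spinPD1 (lam : ℝ) {d : ℕ} (w : Fin d → ℕ) (be ga : Fin d → ℝ)
    (r0 r1 : Fin d → ℕ → ℝ) (i : Fin d) (j : ℕ) : ℝ :=
  deriv (fun t => spinF lam w be ga r0 (Function.update r1 i (Function.update (r1 i) j t)))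
    (r1 i j)

/-
Write `f = λ ∏ᵢ Aᵢ / Bᵢ` with `Aᵢ = 1 - (1 - γᵢ) Pᵢ` and `Bᵢ = 1 - (1 - βᵢ) Qᵢ`, where `Pᵢ` is the
product of the `r/(1+r)` and `Qᵢ` the product of the `1/(1+r)` over the coordinates of edge `i`
occurring in them. As `(x/f) |∂f/∂x| = x |∂ log f/∂x|`, the other edges only contribute a positive
constant factor, and all partial derivatives of `log (Aᵢ/Bᵢ)` in one coordinate have the same sign,
the contribution of edge `i` is exactly `(1 - γᵢ)/Aᵢ · Vᵢ + (1 - βᵢ)/Bᵢ · Uᵢ` with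
`Vᵢ = Pᵢ Σ (1 - pⱼ)` and `Uᵢ = Qᵢ Σ (1 - qⱼ)`, the sums running over the factors `pⱼ` of `Pᵢ`
and `qⱼ` of `Qᵢ`. Since `Aᵢ, Bᵢ ≥ β_c`, both coefficients are at most `(1 - β_c)/β_c`.

From `∏ p ≤ e^{-Σ (1 - p)}` and `t e^{-t} ≤ e^{-1}` one gets `Vᵢ ≤ a e^{-a}` and
`Uᵢ ≤ (1 - a) e^{-(1 - a)}` for `a = r⁰ᵢ₁/(1 + r⁰ᵢ₁)`, hence `Vᵢ + Uᵢ ≤ e^{-1/2}`. On the box every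
factor is at most some `ρ < 1`, so also `Vᵢ + Uᵢ ≤ 2 wᵢ ρ^{wᵢ}`; a small exponent `c` therefore
keeps `wᵢ^c (Vᵢ + Uᵢ)` below any prescribed `M' > e^{-1/2}`. Finally
`Δ (1 - β_c)/β_c · e^{-1/2} = 2Δe^{-1/2} / (2Δe^{-1/2} + 1) < 1` leaves room for such an `M'`.
-/
open Finset Real Function

lemma prod_le_exp_neg_sum_one_sub {ι : Type*} {s : Finset ι} {v : ι → ℝ}
    (hv : ∀ j ∈ s, 0 ≤ v j) : ∏ j ∈ s, v j ≤ exp (-∑ j ∈ s, (1 - v j)) := by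
  rw [← sum_neg_distrib, exp_sum]
  refine prod_le_prod hv fun j _ => ?_
  linarith [add_one_le_exp (-(1 - v j))]

lemma mul_prod_mul_sum_le_mul_exp_neg {ι : Type*} {s : Finset ι} {a : ℝ} {v : ι → ℝ}
    (ha0 : 0 ≤ a) (ha1 : a ≤ 1) (hv0 : ∀ j ∈ s, 0 ≤ v j) (hv1 : ∀ j ∈ s, v j ≤ 1) :
    a * (∏ j ∈ s, v j) * (1 - a + ∑ j ∈ s, (1 - v j)) ≤ a * exp (-a) := by
  set S := ∑ j ∈ s, (1 - v j)
  have hS : 0 ≤ S := sum_nonneg fun j hj => by linarith [hv1 j hj]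
  -- `e^{-S} (1 - a + S) = e^{1-a} · t e^{-t}` with `t = 1 - a + S`, and `t e^{-t} ≤ e^{-1}`
  calc a * (∏ j ∈ s, v j) * (1 - a + S) ≤ a * exp (-S) * (1 - a + S) := by
        gcongr
        exact prod_le_exp_neg_sum_one_sub hv0
    _ = a * exp (1 - a) * ((1 - a + S) * exp (-(1 - a + S))) := by
        rw [show -S = 1 - a + -(1 - a + S) by ring, exp_add]; ring
    _ ≤ a * exp (1 - a) * exp (-1) := by gcongr; exact mul_exp_neg_le_exp_neg_one _
    _ = a * exp (-a) := by rw [mul_assoc, ← exp_add]; ring_nf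

lemma mul_exp_neg_add_mul_exp_neg_le {a : ℝ} (ha0 : 0 ≤ a) (ha1 : a ≤ 1) :
    a * exp (-a) + (1 - a) * exp (-(1 - a)) ≤ exp (-1 / 2) := by
  -- tangent line of `exp` at `-1/2`, then concavity of `t ↦ t / (t + 1/2)`
  have htangent : ∀ t : ℝ, 0 ≤ t → t * exp (-t) ≤ exp (-1 / 2) * (t / (t + 1 / 2)) := by
    intro t ht
    have h : (t + 1 / 2) * exp (-t) ≤ exp (-1 / 2) := by
      calc (t + 1 / 2) * exp (-t) ≤ exp (t - 1 / 2) * exp (-t) := by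
            gcongr; linarith [add_one_le_exp (t - 1 / 2)]
        _ = exp (-1 / 2) := by rw [← exp_add]; ring_nf
    rw [mul_div_assoc', le_div_iff₀ (by linarith)]
    nlinarith [mul_le_mul_of_nonneg_left h ht]
  have hfrac : a / (a + 1 / 2) + (1 - a) / (1 - a + 1 / 2) ≤ 1 := by
    rw [div_add_div _ _ (by linarith) (by linarith), div_le_one (by nlinarith)]
    nlinarith [sq_nonneg (a - 1 / 2)]
  calc a * exp (-a) + (1 - a) * exp (-(1 - a))
      ≤ exp (-1 / 2) * (a / (a + 1 / 2)) + exp (-1 / 2) * ((1 - a) / (1 - a + 1 / 2)) :=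
        add_le_add (htangent a ha0) (htangent _ (by linarith))
    _ ≤ exp (-1 / 2) := by
        rw [← mul_add]; exact mul_le_of_le_one_right (exp_pos _).le hfrac

lemma mul_prod_mul_sum_le_pow {ι : Type*} {s : Finset ι} {a ρ : ℝ} {v : ι → ℝ}
    (ha0 : 0 ≤ a) (haρ : a ≤ ρ) (hv0 : ∀ j ∈ s, 0 ≤ v j) (hvρ : ∀ j ∈ s, v j ≤ ρ) (hρ1 : ρ ≤ 1) :
    a * (∏ j ∈ s, v j) * (1 - a + ∑ j ∈ s, (1 - v j)) ≤ (#s + 1) * ρ ^ (#s + 1) := by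
  have hprod : a * (∏ j ∈ s, v j) ≤ ρ ^ (#s + 1) := by
    rw [pow_succ', ← prod_const]
    exact mul_le_mul haρ (prod_le_prod hv0 hvρ) (prod_nonneg hv0) (ha0.trans haρ)
  have hsum : 1 - a + ∑ j ∈ s, (1 - v j) ≤ #s + 1 := by
    have : ∑ j ∈ s, (1 - v j) ≤ ∑ j ∈ s, (1 : ℝ) := sum_le_sum fun j hj => by linarith [hv0 j hj]
    rw [sum_const, nsmul_one] at this
    linarith
  have hsum0 : 0 ≤ 1 - a + ∑ j ∈ s, (1 - v j) := by
    have : 0 ≤ ∑ j ∈ s, (1 - v j) := sum_nonneg fun j hj => by linarith [hvρ j hj]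
    linarith
  rw [mul_comm (_ + 1 : ℝ)]
  exact mul_le_mul hprod hsum hsum0 (pow_nonneg ((ha0.trans haρ)) _)

lemma exists_rpow_mul_le_of_le_geometric {ρ C M M' : ℝ} (hρ0 : 0 ≤ ρ) (hρ1 : ρ < 1) (hM : 0 < M)
    (hMM' : M < M') :
    ∃ c : ℝ, 0 < c ∧
      ∀ (n : ℕ) (s : ℝ), 0 ≤ s → s ≤ M → s ≤ C * (n * ρ ^ n) → (n : ℝ) ^ c * s ≤ M' := by
  have htend : Filter.Tendsto (fun n : ℕ => C * ((n : ℝ) ^ 2 * ρ ^ n)) Filter.atTop (nhds 0) := by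
    simpa using (tendsto_pow_const_mul_const_pow_of_lt_one 2 hρ0 hρ1).const_mul C
  obtain ⟨N, hN⟩ := Filter.eventually_atTop.1 (htend.eventually_lt_const hM)
  have hN2 : 1 < (N : ℝ) + 2 := by linarith [(N.cast_nonneg : (0 : ℝ) ≤ N)]
  have hθ : 0 < log (M' / M) := log_pos ((one_lt_div hM).2 hMM')
  -- small `n` pay at most the factor `(N + 2) ^ c ≤ M' / M`, large `n` at most `n ^ c ≤ n`
  set c := min 1 (log (M' / M) / log (N + 2))
  have hc0 : 0 < c := lt_min one_pos (div_pos hθ (log_pos hN2))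
  refine ⟨c, hc0, fun n s hs0 hsM hsC => ?_⟩
  rcases le_or_gt n N with hn | hn
  · have hnc : (n : ℝ) ^ c ≤ M' / M := by
      calc (n : ℝ) ^ c ≤ ((N : ℝ) + 2) ^ c := by
            gcongr; exact_mod_cast hn.trans (by omega)
        _ ≤ ((N : ℝ) + 2) ^ (log (M' / M) / log (N + 2)) :=
            rpow_le_rpow_of_exponent_le hN2.le (min_le_right _ _)
        _ = M' / M := by
            rw [rpow_def_of_pos (by linarith), mul_div_cancel₀ _ (log_pos hN2).ne',
              exp_log (div_pos (hM.trans hMM') hM)]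
    calc (n : ℝ) ^ c * s ≤ M' / M * M := mul_le_mul hnc hsM hs0 (div_pos (hM.trans hMM') hM).le
      _ = M' := div_mul_cancel₀ _ hM.ne'
  · have hn1 : (1 : ℝ) ≤ n := by exact_mod_cast (Nat.zero_le N).trans_lt hn
    calc (n : ℝ) ^ c * s ≤ n * (C * (n * ρ ^ n)) := by
          refine mul_le_mul ?_ hsC hs0 (by positivity)
          simpa using rpow_le_rpow_of_exponent_le hn1 (min_le_left 1 _)
      _ = C * ((n : ℝ) ^ 2 * ρ ^ n) := by ring
      _ ≤ M' := (hN n hn.le).le.trans hMM'.le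

lemma div_mul_abs_deriv_const_mul {K x : ℝ} (hK : 0 < K) (h : ℝ → ℝ) :
    x / (K * h x) * |deriv (fun t => K * h t) x| = x / h x * |deriv h x| := by
  rw [deriv_const_mul_field', abs_mul, abs_of_pos hK]
  rcases eq_or_ne (h x) 0 with h0 | h0
  · simp [h0]
  · field_simp

lemma hasDerivAt_div_one_add {x : ℝ} (hx : 1 + x ≠ 0) :
    HasDerivAt (fun t => t / (1 + t)) (1 / (1 + x) ^ 2) x :=
  ((hasDerivAt_id' x).fun_div ((hasDerivAt_id' x).const_add 1) hx).congr_deriv (by ring)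

lemma hasDerivAt_one_div_one_add {x : ℝ} (hx : 1 + x ≠ 0) :
    HasDerivAt (fun t => 1 / (1 + t)) (-(1 / (1 + x) ^ 2)) x :=
  ((hasDerivAt_const x 1).fun_div ((hasDerivAt_id' x).const_add 1) hx).congr_deriv (by ring)

/-- Both summands of the logarithmic derivative have the same sign, so their absolute values add. -/
lemma div_mul_abs_deriv_ratio {a b u v x : ℝ} (hx : 0 ≤ x) (hu : 0 ≤ u) (hv : 0 ≤ v)
    (hN : 0 < a - u * (x / (1 + x))) (hD : 0 < b - v * (1 / (1 + x))) :
    x / ((a - u * (x / (1 + x))) / (b - v * (1 / (1 + x)))) *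
        |deriv (fun t => (a - u * (t / (1 + t))) / (b - v * (1 / (1 + t)))) x| =
      u * (x / (1 + x)) / (a - u * (x / (1 + x))) * (1 / (1 + x)) +
        v * (1 / (1 + x)) / (b - v * (1 / (1 + x))) * (x / (1 + x)) := by
  have hx1 : 0 < 1 + x := by linarith
  have hderiv : HasDerivAt (fun t => (a - u * (t / (1 + t))) / (b - v * (1 / (1 + t))))
      (-((u * (b - v * (1 / (1 + x))) + v * (a - u * (x / (1 + x)))) /
        ((1 + x) ^ 2 * (b - v * (1 / (1 + x))) ^ 2))) x := by
    refine ((((hasDerivAt_div_one_add hx1.ne').const_mul u).const_sub a).fun_div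
      (((hasDerivAt_one_div_one_add hx1.ne').const_mul v).const_sub b) hD.ne').congr_deriv ?_
    field_simp
    ring
  rw [hderiv.deriv, abs_neg, abs_of_nonneg (by positivity)]
  have hN' : a * (1 + x) - x * u ≠ 0 := by
    rw [show a * (1 + x) - x * u = (a - u * (x / (1 + x))) * (1 + x) by field_simp]; positivity
  have hD' : (1 + x) * b - v ≠ 0 := by
    rw [show (1 + x) * b - v = (b - v * (1 / (1 + x))) * (1 + x) by field_simp]; positivity
  field_simp

lemma Finset.prod_apply_update_of_mem {ι X M : Type*} [DecidableEq ι] [CommMonoid M]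
    {s : Finset ι} {i : ι} (h : i ∈ s) (F : ι → X → M) (f : ι → X) (x : X) :
    ∏ k ∈ s, F k (update f i x k) = F i x * ∏ k ∈ s.erase i, F k (f k) := by
  rw [← mul_prod_erase s _ h, update_self]
  congr 1
  exact prod_congr rfl fun k hk => by rw [update_of_ne (ne_of_mem_erase hk)]

lemma one_div_one_add_eq_one_sub {z : ℝ} (hz : 1 + z ≠ 0) : 1 / (1 + z) = 1 - z / (1 + z) := by
  field_simp; ring

lemma le_one_sub_mul {g p : ℝ} (hg : g ≤ 1) (hp1 : p ≤ 1) : g ≤ 1 - (1 - g) * p := by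
  nlinarith

lemma one_sub_div_le_one_sub_div {β g A : ℝ} (hβ : 0 < β) (hg : g ∈ Set.Icc β 1) (hA : g ≤ A) :
    (1 - g) / A ≤ (1 - β) / β :=
  div_le_div₀ (by linarith [hg.1.trans hg.2]) (by linarith [hg.1]) hβ (hg.1.trans hA)

noncomputable def edgeRatio (n : ℕ) (b g : ℝ) (x y : ℕ → ℝ) : ℝ :=
  (1 - (1 - g) * (x 0 / (1 + x 0)) * ∏ j ∈ Ico 1 n, y j / (1 + y j)) /
    (1 - (1 - b) * (1 / (1 + x 0)) * ∏ j ∈ Ico 1 n, 1 / (1 + x j))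

noncomputable def edgeP (n : ℕ) (x y : ℕ → ℝ) : ℝ :=
  x 0 / (1 + x 0) * ∏ j ∈ Ico 1 n, y j / (1 + y j)

noncomputable def edgeQ (n : ℕ) (x : ℕ → ℝ) : ℝ :=
  1 / (1 + x 0) * ∏ j ∈ Ico 1 n, 1 / (1 + x j)

noncomputable def edgeSensitivity (n : ℕ) (b g : ℝ) (x y : ℕ → ℝ) : ℝ :=
  (∑ j ∈ range n,
      x j / edgeRatio n b g x y * |deriv (fun t => edgeRatio n b g (update x j t) y) (x j)|) +
    ∑ j ∈ Ico 1 n,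
      y j / edgeRatio n b g x y * |deriv (fun t => edgeRatio n b g x (update y j t)) (y j)|

noncomputable def edgeV (n : ℕ) (x y : ℕ → ℝ) : ℝ :=
  edgeP n x y * (1 / (1 + x 0) + ∑ j ∈ Ico 1 n, 1 / (1 + y j))

noncomputable def edgeU (n : ℕ) (x : ℕ → ℝ) : ℝ :=
  edgeQ n x * (x 0 / (1 + x 0) + ∑ j ∈ Ico 1 n, x j / (1 + x j))

section Edge

variable {n : ℕ} {b g : ℝ} {x y : ℕ → ℝ}

lemma edgeRatio_eq :
    edgeRatio n b g x y = (1 - (1 - g) * edgeP n x y) / (1 - (1 - b) * edgeQ n x) := by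
  simp only [edgeRatio, edgeP, edgeQ, mul_assoc]

lemma edgeP_nonneg (hx0 : 0 ≤ x 0) (hy : ∀ j ∈ Ico 1 n, 0 ≤ y j) : 0 ≤ edgeP n x y :=
  mul_nonneg (by positivity) (prod_nonneg fun j hj => by have := hy j hj; positivity)

lemma edgeP_le_one (hx0 : 0 ≤ x 0) (hy : ∀ j ∈ Ico 1 n, 0 ≤ y j) : edgeP n x y ≤ 1 :=
  mul_le_one₀ (div_le_one_of_le₀ (by linarith) (by positivity))
    (prod_nonneg fun j hj => by have := hy j hj; positivity)
    (prod_le_one (fun j hj => by have := hy j hj; positivity)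
      fun j hj => div_le_one_of_le₀ (by linarith) (by linarith [hy j hj]))

lemma edgeQ_nonneg (hx0 : 0 ≤ x 0) (hx : ∀ j ∈ Ico 1 n, 0 ≤ x j) : 0 ≤ edgeQ n x :=
  mul_nonneg (by positivity) (prod_nonneg fun j hj => by have := hx j hj; positivity)

lemma edgeQ_le_one (hx0 : 0 ≤ x 0) (hx : ∀ j ∈ Ico 1 n, 0 ≤ x j) : edgeQ n x ≤ 1 :=
  mul_le_one₀ (div_le_one_of_le₀ (by linarith) (by positivity))
    (prod_nonneg fun j hj => by have := hx j hj; positivity)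
    (prod_le_one (fun j hj => by have := hx j hj; positivity)
      fun j hj => div_le_one_of_le₀ (by linarith [hx j hj]) (by linarith [hx j hj]))

lemma edgeRatio_pos (hg0 : 0 < g) (hg1 : g ≤ 1) (hb0 : 0 < b)
    (hb1 : b ≤ 1) (hx0 : 0 ≤ x 0) (hx : ∀ j ∈ Ico 1 n, 0 ≤ x j) (hy : ∀ j ∈ Ico 1 n, 0 ≤ y j) :
    0 < edgeRatio n b g x y := by
  rw [edgeRatio_eq]
  exact div_pos (hg0.trans_le (le_one_sub_mul hg1 (edgeP_le_one hx0 hy)))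
    (hb0.trans_le (le_one_sub_mul hb1 (edgeQ_le_one hx0 hx)))

lemma div_edgeRatio_mul_abs_deriv_right {j : ℕ} (hj : j ∈ Ico 1 n) (hg0 : 0 < g) (hg1 : g ≤ 1)
    (hb0 : 0 < b) (hb1 : b ≤ 1) (hx0 : 0 ≤ x 0) (hx : ∀ j ∈ Ico 1 n, 0 ≤ x j)
    (hy : ∀ j ∈ Ico 1 n, 0 ≤ y j) :
    y j / edgeRatio n b g x y * |deriv (fun t => edgeRatio n b g x (update y j t)) (y j)| =
      (1 - g) * edgeP n x y / (1 - (1 - g) * edgeP n x y) * (1 / (1 + y j)) := by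
  set u := (1 - g) * (x 0 / (1 + x 0)) * ∏ k ∈ (Ico 1 n).erase j, y k / (1 + y k)
  set D := 1 - (1 - b) * edgeQ n x
  have hE : ∀ t, edgeRatio n b g x (update y j t) =
      (1 - u * (t / (1 + t))) / (D - 0 * (1 / (1 + t))) := by
    intro t
    rw [edgeRatio, prod_apply_update_of_mem hj (fun _ z => z / (1 + z))]
    simp only [u, D, edgeQ]
    ring
  have hu : u * (y j / (1 + y j)) = (1 - g) * edgeP n x y := by
    rw [edgeP, ← mul_prod_erase _ _ hj]; ring
  have hE0 := hE (y j)
  rw [update_eq_self] at hE0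
  have hA : 0 < 1 - (1 - g) * edgeP n x y :=
    hg0.trans_le (le_one_sub_mul hg1 (edgeP_le_one hx0 hy))
  have hB : 0 < D := hb0.trans_le (le_one_sub_mul hb1 (edgeQ_le_one hx0 hx))
  rw [hE0, funext hE, div_mul_abs_deriv_ratio (hy j hj) _ le_rfl (by rwa [hu]) (by simpa), hu]
  · simp
  · exact mul_nonneg (mul_nonneg (by linarith) (by positivity))
      (prod_nonneg fun k hk => by have := hy k (mem_of_mem_erase hk); positivity)

lemma div_edgeRatio_mul_abs_deriv_left {j : ℕ} (hj : j ∈ Ico 1 n) (hg0 : 0 < g) (hg1 : g ≤ 1)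
    (hb0 : 0 < b) (hb1 : b ≤ 1) (hx0 : 0 ≤ x 0) (hx : ∀ j ∈ Ico 1 n, 0 ≤ x j)
    (hy : ∀ j ∈ Ico 1 n, 0 ≤ y j) :
    x j / edgeRatio n b g x y * |deriv (fun t => edgeRatio n b g (update x j t) y) (x j)| =
      (1 - b) * edgeQ n x / (1 - (1 - b) * edgeQ n x) * (x j / (1 + x j)) := by
  set v := (1 - b) * (1 / (1 + x 0)) * ∏ k ∈ (Ico 1 n).erase j, 1 / (1 + x k)
  set N := 1 - (1 - g) * edgeP n x y
  have hj0 : (0 : ℕ) ≠ j := by have := (mem_Ico.1 hj).1; omega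
  have hE : ∀ t, edgeRatio n b g (update x j t) y =
      (N - 0 * (t / (1 + t))) / (1 - v * (1 / (1 + t))) := by
    intro t
    rw [edgeRatio, update_of_ne hj0, prod_apply_update_of_mem hj (fun _ z => 1 / (1 + z))]
    simp only [v, N, edgeP]
    ring
  have hv : v * (1 / (1 + x j)) = (1 - b) * edgeQ n x := by
    rw [edgeQ, ← mul_prod_erase _ (fun k => 1 / (1 + x k)) hj]; ring
  have hE0 := hE (x j)
  rw [update_eq_self] at hE0
  have hA : 0 < N := hg0.trans_le (le_one_sub_mul hg1 (edgeP_le_one hx0 hy))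
  have hB : 0 < 1 - (1 - b) * edgeQ n x :=
    hb0.trans_le (le_one_sub_mul hb1 (edgeQ_le_one hx0 hx))
  rw [hE0, funext hE, div_mul_abs_deriv_ratio (hx j hj) le_rfl _ (by simpa) (by rwa [hv]), hv]
  · simp
  · exact mul_nonneg (mul_nonneg (by linarith) (by positivity))
      (prod_nonneg fun k hk => by have := hx k (mem_of_mem_erase hk); positivity)

lemma div_edgeRatio_mul_abs_deriv_zero (hg0 : 0 < g) (hg1 : g ≤ 1)
    (hb0 : 0 < b) (hb1 : b ≤ 1) (hx0 : 0 ≤ x 0) (hx : ∀ j ∈ Ico 1 n, 0 ≤ x j)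
    (hy : ∀ j ∈ Ico 1 n, 0 ≤ y j) :
    x 0 / edgeRatio n b g x y * |deriv (fun t => edgeRatio n b g (update x 0 t) y) (x 0)| =
      (1 - g) * edgeP n x y / (1 - (1 - g) * edgeP n x y) * (1 / (1 + x 0)) +
        (1 - b) * edgeQ n x / (1 - (1 - b) * edgeQ n x) * (x 0 / (1 + x 0)) := by
  set u := (1 - g) * ∏ k ∈ Ico 1 n, y k / (1 + y k)
  set v := (1 - b) * ∏ k ∈ Ico 1 n, 1 / (1 + x k)
  have hE : ∀ t, edgeRatio n b g (update x 0 t) y =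
      (1 - u * (t / (1 + t))) / (1 - v * (1 / (1 + t))) := by
    intro t
    have hrest : ∏ k ∈ Ico 1 n, 1 / (1 + update x 0 t k) = ∏ k ∈ Ico 1 n, 1 / (1 + x k) :=
      prod_congr rfl fun k hk => by
        rw [update_of_ne (by have := (mem_Ico.1 hk).1; omega)]
    rw [edgeRatio, update_self, hrest]
    ring
  have hu : u * (x 0 / (1 + x 0)) = (1 - g) * edgeP n x y := by rw [edgeP]; ring
  have hv : v * (1 / (1 + x 0)) = (1 - b) * edgeQ n x := by rw [edgeQ]; ring
  have hE0 := hE (x 0)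
  rw [update_eq_self] at hE0
  have hA : 0 < 1 - (1 - g) * edgeP n x y :=
    hg0.trans_le (le_one_sub_mul hg1 (edgeP_le_one hx0 hy))
  have hB : 0 < 1 - (1 - b) * edgeQ n x :=
    hb0.trans_le (le_one_sub_mul hb1 (edgeQ_le_one hx0 hx))
  rw [hE0, funext hE, div_mul_abs_deriv_ratio hx0 _ _ (by rwa [hu]) (by rwa [hv]), hu, hv]
  · exact mul_nonneg (by linarith) (prod_nonneg fun k hk => by have := hy k hk; positivity)
  · exact mul_nonneg (by linarith) (prod_nonneg fun k hk => by have := hx k hk; positivity)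

lemma edgeSensitivity_eq (hn : 0 < n) (hg0 : 0 < g) (hg1 : g ≤ 1)
    (hb0 : 0 < b) (hb1 : b ≤ 1) (hx0 : 0 ≤ x 0) (hx : ∀ j ∈ Ico 1 n, 0 ≤ x j)
    (hy : ∀ j ∈ Ico 1 n, 0 ≤ y j) :
    edgeSensitivity n b g x y =
      (1 - g) / (1 - (1 - g) * edgeP n x y) * edgeV n x y +
        (1 - b) / (1 - (1 - b) * edgeQ n x) * edgeU n x := by
  rw [edgeSensitivity, range_eq_Ico, ← insert_Ico_add_one_left_eq_Ico hn, zero_add,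
    sum_insert (by simp), div_edgeRatio_mul_abs_deriv_zero hg0 hg1 hb0 hb1 hx0 hx hy,
    sum_congr rfl fun j hj => div_edgeRatio_mul_abs_deriv_left hj hg0 hg1 hb0 hb1 hx0 hx hy,
    sum_congr rfl fun j hj => div_edgeRatio_mul_abs_deriv_right hj hg0 hg1 hb0 hb1 hx0 hx hy,
    ← mul_sum, ← mul_sum, edgeV, edgeU]
  ring

lemma edgeV_nonneg (hx0 : 0 ≤ x 0) (hy : ∀ j ∈ Ico 1 n, 0 ≤ y j) : 0 ≤ edgeV n x y :=
  mul_nonneg (edgeP_nonneg hx0 hy)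
    (add_nonneg (by positivity) (sum_nonneg fun j hj => by have := hy j hj; positivity))

lemma edgeU_nonneg (hx0 : 0 ≤ x 0) (hx : ∀ j ∈ Ico 1 n, 0 ≤ x j) : 0 ≤ edgeU n x :=
  mul_nonneg (edgeQ_nonneg hx0 hx)
    (add_nonneg (by positivity) (sum_nonneg fun j hj => by have := hx j hj; positivity))

lemma edgeSensitivity_le {β : ℝ} (hβ : 0 < β) (hg : g ∈ Set.Icc β 1) (hb : b ∈ Set.Icc β 1)
    (hn : 0 < n) (hx0 : 0 ≤ x 0) (hx : ∀ j ∈ Ico 1 n, 0 ≤ x j) (hy : ∀ j ∈ Ico 1 n, 0 ≤ y j) :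
    edgeSensitivity n b g x y ≤ (1 - β) / β * (edgeV n x y + edgeU n x) := by
  have hg0 : 0 < g := hβ.trans_le hg.1
  have hb0 : 0 < b := hβ.trans_le hb.1
  rw [edgeSensitivity_eq hn hg0 hg.2 hb0 hb.2 hx0 hx hy, mul_add]
  exact add_le_add
    (mul_le_mul_of_nonneg_right
      (one_sub_div_le_one_sub_div hβ hg (le_one_sub_mul hg.2 (edgeP_le_one hx0 hy)))
      (edgeV_nonneg hx0 hy))
    (mul_le_mul_of_nonneg_right
      (one_sub_div_le_one_sub_div hβ hb (le_one_sub_mul hb.2 (edgeQ_le_one hx0 hx)))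
      (edgeU_nonneg hx0 hx))

lemma edgeV_eq (hx0 : 0 ≤ x 0) (hy : ∀ j ∈ Ico 1 n, 0 ≤ y j) :
    edgeV n x y = x 0 / (1 + x 0) * (∏ j ∈ Ico 1 n, y j / (1 + y j)) *
      (1 - x 0 / (1 + x 0) + ∑ j ∈ Ico 1 n, (1 - y j / (1 + y j))) := by
  rw [edgeV, edgeP, one_div_one_add_eq_one_sub (by linarith),
    sum_congr rfl fun j hj => one_div_one_add_eq_one_sub (by linarith [hy j hj])]

lemma edgeU_eq (hx0 : 0 ≤ x 0) (hx : ∀ j ∈ Ico 1 n, 0 ≤ x j) :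
    edgeU n x = 1 / (1 + x 0) * (∏ j ∈ Ico 1 n, 1 / (1 + x j)) *
      (1 - 1 / (1 + x 0) + ∑ j ∈ Ico 1 n, (1 - 1 / (1 + x j))) := by
  have hσ : ∀ z : ℝ, 0 ≤ z → z / (1 + z) = 1 - 1 / (1 + z) := fun z hz => by
    rw [one_div_one_add_eq_one_sub (by linarith)]; ring
  rw [edgeU, edgeQ, hσ _ hx0, sum_congr rfl fun j hj => hσ _ (hx j hj)]

lemma edgeV_add_edgeU_le_exp (hx0 : 0 ≤ x 0) (hx : ∀ j ∈ Ico 1 n, 0 ≤ x j)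
    (hy : ∀ j ∈ Ico 1 n, 0 ≤ y j) : edgeV n x y + edgeU n x ≤ exp (-1 / 2) := by
  have hq : 1 / (1 + x 0) = 1 - x 0 / (1 + x 0) := one_div_one_add_eq_one_sub (by linarith)
  have ha0 : 0 ≤ x 0 / (1 + x 0) := by positivity
  have ha1 : x 0 / (1 + x 0) ≤ 1 := div_le_one_of_le₀ (by linarith) (by positivity)
  have hV := mul_prod_mul_sum_le_mul_exp_neg (s := Ico 1 n) (v := fun j => y j / (1 + y j)) ha0 ha1
    (fun j hj => by have := hy j hj; positivity)
    (fun j hj => div_le_one_of_le₀ (by linarith) (by linarith [hy j hj]))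
  have hU := mul_prod_mul_sum_le_mul_exp_neg (s := Ico 1 n) (v := fun j => 1 / (1 + x j))
    (a := 1 / (1 + x 0)) (by positivity)
    (div_le_one_of_le₀ (by linarith) (by positivity))
    (fun j hj => by have := hx j hj; positivity)
    (fun j hj => div_le_one_of_le₀ (by linarith [hx j hj]) (by linarith [hx j hj]))
  rw [← edgeV_eq hx0 hy] at hV
  rw [← edgeU_eq hx0 hx, hq] at hU
  linarith [mul_exp_neg_add_mul_exp_neg_le ha0 ha1]

lemma edgeV_add_edgeU_le_pow {m M : ℝ} (hn : 0 < n) (hm : 0 ≤ m) (hx0 : x 0 ∈ Set.Icc m M)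
    (hx : ∀ j ∈ Ico 1 n, x j ∈ Set.Icc m M) (hy : ∀ j ∈ Ico 1 n, y j ∈ Set.Icc m M) :
    edgeV n x y + edgeU n x ≤ 2 * (n * max (M / (1 + M)) (1 / (1 + m)) ^ n) := by
  set ρ := max (M / (1 + M)) (1 / (1 + m))
  have hσ : ∀ z ∈ Set.Icc m M, 0 ≤ z / (1 + z) ∧ z / (1 + z) ≤ ρ := fun z hz => by
    have := hm.trans hz.1
    refine ⟨by positivity, le_max_of_le_left ?_⟩
    rw [div_le_div_iff₀ (by linarith) (by linarith [hz.2])]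
    nlinarith [hz.2]
  have hq : ∀ z ∈ Set.Icc m M, 0 ≤ 1 / (1 + z) ∧ 1 / (1 + z) ≤ ρ := fun z hz => by
    have := hm.trans hz.1
    exact ⟨by positivity,
      le_max_of_le_right (one_div_le_one_div_of_le (by linarith) (by linarith [hz.1]))⟩
  have hρ1 : ρ ≤ 1 :=
    max_le (div_le_one_of_le₀ (by linarith) (by linarith [hm.trans (hx0.1.trans hx0.2)]))
      (div_le_one_of_le₀ (by linarith) (by linarith))
  have hcard : #(Ico 1 n) + 1 = n := by rw [Nat.card_Ico]; omega
  have hV := mul_prod_mul_sum_le_pow (hσ _ hx0).1 (hσ _ hx0).2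
    (fun j hj => (hσ _ (hy j hj)).1) (fun j hj => (hσ _ (hy j hj)).2) hρ1
  have hU := mul_prod_mul_sum_le_pow (hq _ hx0).1 (hq _ hx0).2
    (fun j hj => (hq _ (hx j hj)).1) (fun j hj => (hq _ (hx j hj)).2) hρ1
  rw [← Nat.cast_add_one, hcard, ← edgeV_eq (hm.trans hx0.1) fun j hj => hm.trans (hy j hj).1]
    at hV
  rw [← Nat.cast_add_one, hcard, ← edgeU_eq (hm.trans hx0.1) fun j hj => hm.trans (hx j hj).1]
    at hU
  linarith

lemma rpow_mul_edgeSensitivity_le {β m M c K : ℝ} (hβ : 0 < β) (hg : g ∈ Set.Icc β 1)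
    (hb : b ∈ Set.Icc β 1) (hn : 0 < n) (hm : 0 ≤ m) (hx0 : x 0 ∈ Set.Icc m M)
    (hx : ∀ j ∈ Ico 1 n, x j ∈ Set.Icc m M) (hy : ∀ j ∈ Ico 1 n, y j ∈ Set.Icc m M)
    (hc : ∀ s : ℝ, 0 ≤ s → s ≤ exp (-1 / 2) →
      s ≤ 2 * (n * max (M / (1 + M)) (1 / (1 + m)) ^ n) → (n : ℝ) ^ c * s ≤ K) :
    (n : ℝ) ^ c * edgeSensitivity n b g x y ≤ (1 - β) / β * K := by
  have hx0' : 0 ≤ x 0 := hm.trans hx0.1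
  have hx' : ∀ j ∈ Ico 1 n, 0 ≤ x j := fun j hj => hm.trans (hx j hj).1
  have hy' : ∀ j ∈ Ico 1 n, 0 ≤ y j := fun j hj => hm.trans (hy j hj).1
  calc (n : ℝ) ^ c * edgeSensitivity n b g x y
      ≤ (n : ℝ) ^ c * ((1 - β) / β * (edgeV n x y + edgeU n x)) :=
        mul_le_mul_of_nonneg_left (edgeSensitivity_le hβ hg hb hn hx0' hx' hy') (by positivity)
    _ = (1 - β) / β * ((n : ℝ) ^ c * (edgeV n x y + edgeU n x)) := by ring
    _ ≤ (1 - β) / β * K := by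
        refine mul_le_mul_of_nonneg_left (hc _ ?_ ?_ ?_) ?_
        · exact add_nonneg (edgeV_nonneg hx0' hy') (edgeU_nonneg hx0' hx')
        · exact edgeV_add_edgeU_le_exp hx0' hx' hy'
        · exact edgeV_add_edgeU_le_pow hn hm hx0 hx hy
        · exact div_nonneg (by linarith [hg.1.trans hg.2]) hβ.le

end Edge

section Spin
variable (lam : ℝ) {d : ℕ} (w : Fin d → ℕ) (be ga : Fin d → ℝ) (r0 r1 : Fin d → ℕ → ℝ)

lemma spinF_eq_prod_edgeRatio :
    spinF lam w be ga r0 r1 = lam * ∏ i, edgeRatio (w i) (be i) (ga i) (r0 i) (r1 i) := rfl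

lemma spinF_update_left (i : Fin d) (x : ℕ → ℝ) :
    spinF lam w be ga (update r0 i x) r1 =
      lam * (∏ k ∈ univ.erase i, edgeRatio (w k) (be k) (ga k) (r0 k) (r1 k)) *
        edgeRatio (w i) (be i) (ga i) x (r1 i) := by
  rw [spinF_eq_prod_edgeRatio,
    prod_apply_update_of_mem (mem_univ i) (fun k z => edgeRatio (w k) (be k) (ga k) z (r1 k))]
  ring

lemma spinF_update_right (i : Fin d) (y : ℕ → ℝ) :
    spinF lam w be ga r0 (update r1 i y) =
      lam * (∏ k ∈ univ.erase i, edgeRatio (w k) (be k) (ga k) (r0 k) (r1 k)) *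
        edgeRatio (w i) (be i) (ga i) (r0 i) y := by
  rw [spinF_eq_prod_edgeRatio,
    prod_apply_update_of_mem (mem_univ i) (fun k z => edgeRatio (w k) (be k) (ga k) (r0 k) z)]
  ring

variable {lam w be ga r0 r1}

lemma spin_sum_eq_edgeSensitivity (hlam : 0 < lam)
    (hpos : ∀ k, 0 < edgeRatio (w k) (be k) (ga k) (r0 k) (r1 k)) (i : Fin d) :
    (∑ j ∈ range (w i), r0 i j / spinF lam w be ga r0 r1 * |spinPD0 lam w be ga r0 r1 i j|) +
        ∑ j ∈ Ico 1 (w i), r1 i j / spinF lam w be ga r0 r1 * |spinPD1 lam w be ga r0 r1 i j| =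
      edgeSensitivity (w i) (be i) (ga i) (r0 i) (r1 i) := by
  have hK : 0 < lam * ∏ k ∈ univ.erase i, edgeRatio (w k) (be k) (ga k) (r0 k) (r1 k) :=
    mul_pos hlam (prod_pos fun k _ => hpos k)
  have hF : spinF lam w be ga r0 r1 =
      lam * (∏ k ∈ univ.erase i, edgeRatio (w k) (be k) (ga k) (r0 k) (r1 k)) *
        edgeRatio (w i) (be i) (ga i) (r0 i) (r1 i) := by
    rw [← spinF_update_left, update_eq_self]
  rw [edgeSensitivity, hF]
  congr 1 <;> refine sum_congr rfl fun j _ => ?_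
  · have h := div_mul_abs_deriv_const_mul (x := r0 i j) hK
      fun t => edgeRatio (w i) (be i) (ga i) (update (r0 i) j t) (r1 i)
    simp only [update_eq_self] at h
    simpa only [spinPD0, spinF_update_left] using h
  · have h := div_mul_abs_deriv_const_mul (x := r1 i j) hK
      fun t => edgeRatio (w i) (be i) (ga i) (r0 i) (update (r1 i) j t)
    simp only [update_eq_self] at h
    simpa only [spinPD1, spinF_update_right] using h

end Spin

lemma criticalBeta_bounds {Δ : ℕ} (hΔ : 0 < Δ) {βc : ℝ}
    (hβc : βc = 1 - 2 / (2 * exp (-(1 : ℝ) / 2) * Δ + 3)) :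
    0 < βc ∧ βc < 1 ∧ Δ * ((1 - βc) / βc) * exp (-1 / 2) < 1 := by
  have hE : 0 < exp (-(1 : ℝ) / 2) := exp_pos _
  have hΔ' : (0 : ℝ) < Δ := by exact_mod_cast hΔ
  have hD : 0 < 2 * exp (-(1 : ℝ) / 2) * Δ + 1 := by positivity
  have h1 : 1 - βc = 2 / (2 * exp (-(1 : ℝ) / 2) * Δ + 3) := by rw [hβc]; ring
  have h2 : βc = (2 * exp (-(1 : ℝ) / 2) * Δ + 1) / (2 * exp (-(1 : ℝ) / 2) * Δ + 3) := by
    rw [hβc]; field_simp; ring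
  refine ⟨by rw [h2]; positivity, by rw [h2, div_lt_one (by positivity)]; linarith, ?_⟩
  rw [h1, h2, div_div_div_cancel_right₀ (by positivity), mul_div_assoc', div_mul_eq_mul_div,
    div_lt_one hD]
  linarith

/-- Amortized decay-rate bound for the two-state spin recursion: for Δ ≥ 2, d ≤ Δ,
    λ ∈ (0,1), β_c = 1 − 2/(2e^{−1/2}Δ + 3) and all γᵢ, βᵢ ∈ [β_c, 1], there exist
    α < 1 and c > 0 (independent of the wᵢ) such that, with the potential Φ(x) = 1/x
    (so (Φ(f)/Φ(x))|∂f/∂x| = (x/f)·|∂f/∂x|),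
    Σᵢ wᵢ^c (Σ_{j=1}^{wᵢ} (r⁰ᵢⱼ/f)|∂f/∂r⁰ᵢⱼ| + Σ_{j=2}^{wᵢ} (r¹ᵢⱼ/f)|∂f/∂r¹ᵢⱼ|) ≤ α
    whenever all coordinates lie in [λβ_c^Δ, λβ_c^{−Δ}]. -/
theorem stmt_15 (Δ : ℕ) (hΔ : 2 ≤ Δ) (d : ℕ) (hd : d ≤ Δ)
    (lam : ℝ) (hlam : lam ∈ Set.Ioo (0 : ℝ) 1)
    (βc : ℝ) (hβc : βc = 1 - 2 / (2 * Real.exp (-(1 : ℝ) / 2) * Δ + 3))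
    (ga be : Fin d → ℝ) (hga : ∀ i, ga i ∈ Set.Icc βc 1) (hbe : ∀ i, be i ∈ Set.Icc βc 1) :
    ∃ α c : ℝ, α < 1 ∧ 0 < c ∧
      ∀ w : Fin d → ℕ, (∀ i, 0 < w i) →
        ∀ r0 r1 : Fin d → ℕ → ℝ,
          (∀ i j, j < w i → r0 i j ∈ Set.Icc (lam * βc ^ Δ) (lam / βc ^ Δ)) →
          (∀ i j, 1 ≤ j → j < w i → r1 i j ∈ Set.Icc (lam * βc ^ Δ) (lam / βc ^ Δ)) →
          ∑ i : Fin d, (w i : ℝ) ^ c *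
              ((∑ j ∈ Finset.range (w i),
                  r0 i j / spinF lam w be ga r0 r1 * |spinPD0 lam w be ga r0 r1 i j|) +
               (∑ j ∈ Finset.Ico 1 (w i),
                  r1 i j / spinF lam w be ga r0 r1 * |spinPD1 lam w be ga r0 r1 i j|)) ≤ α := by
  obtain ⟨hβ0, hβ1, hrate⟩ := criticalBeta_bounds (by omega : 0 < Δ) hβc
  set κ := (1 - βc) / βc
  have hκ : 0 < Δ * κ := mul_pos (by exact_mod_cast (by omega : 0 < Δ)) (div_pos (by linarith) hβ0)
  have hm : 0 < lam * βc ^ Δ := mul_pos hlam.1 (pow_pos hβ0 Δ)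
  have hM : 0 < lam / βc ^ Δ := div_pos hlam.1 (pow_pos hβ0 Δ)
  have hρ1 : max (lam / βc ^ Δ / (1 + lam / βc ^ Δ)) (1 / (1 + lam * βc ^ Δ)) < 1 :=
    max_lt ((div_lt_one (by linarith)).2 (by linarith)) ((div_lt_one (by linarith)).2 (by linarith))
  obtain ⟨M', hM'e, hM'κ⟩ := exists_between ((lt_div_iff₀' hκ).2 hrate)
  obtain ⟨c, hc0, hc⟩ := exists_rpow_mul_le_of_le_geometric (C := 2)
    (le_max_of_le_right (by positivity)) hρ1 (exp_pos _) hM'e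
  refine ⟨Δ * κ * M', c, (lt_div_iff₀' hκ).1 hM'κ, hc0, fun w hw r0 r1 h0 h1 => ?_⟩
  have hx0 := fun i => h0 i 0 (hw i)
  have hx : ∀ i, ∀ j ∈ Ico 1 (w i), _ := fun i j hj => h0 i j (mem_Ico.1 hj).2
  have hy : ∀ i, ∀ j ∈ Ico 1 (w i), _ := fun i j hj => h1 i j (mem_Ico.1 hj).1 (mem_Ico.1 hj).2
  have hpos : ∀ i, 0 < edgeRatio (w i) (be i) (ga i) (r0 i) (r1 i) := fun i =>
    edgeRatio_pos (hβ0.trans_le (hga i).1) (hga i).2 (hβ0.trans_le (hbe i).1) (hbe i).2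
      (hm.le.trans (hx0 i).1) (fun j hj => hm.le.trans (hx i j hj).1)
      (fun j hj => hm.le.trans (hy i j hj).1)
  simp only [spin_sum_eq_edgeSensitivity hlam.1 hpos]
  calc ∑ i, (w i : ℝ) ^ c * edgeSensitivity (w i) (be i) (ga i) (r0 i) (r1 i)
      ≤ ∑ _i : Fin d, κ * M' := sum_le_sum fun i _ =>
        rpow_mul_edgeSensitivity_le hβ0 (hga i) (hbe i) (hw i) hm.le (hx0 i) (hx i) (hy i) (hc _)
    _ = d * (κ * M') := by simp
    _ ≤ Δ * κ * M' := by
        rw [mul_assoc]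
        gcongr
        exact mul_nonneg (div_pos (by linarith) hβ0).le ((exp_pos _).trans hM'e).le
end

section
/- Define h(x) = (2x/(2e^{−1/2}x + 1)) · e^{ (1 − 2/(2e^{−1/2}x + 3))^{−1}/2 − 1 } for x ≥ 1. Then h is increasing on [1, ∞), lim_{x→∞} h(x) = 1, and consequently h(x) < 1 for every x ≥ 1. -/
/-!
Substituting `u = (2 e^{-1/2} x + 1)⁻¹` turns `h` into `(1 - u) e^u`. This function has derivative
`-u e^u`, so it strictly decreases on `[0, ∞)` from its value `1` at `u = 0`, while `u` strictly
decreases to `0` as `x` grows. Hence `h` strictly increases to `1` and stays below it.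
-/

open Set Filter Topology

/-- The total decay factor of the two-spin analysis. -/
noncomputable def h17 (x : ℝ) : ℝ :=
  (2 * x / (2 * Real.exp (-(1 : ℝ) / 2) * x + 1)) *
    Real.exp ((1 - 2 / (2 * Real.exp (-(1 : ℝ) / 2) * x + 3))⁻¹ / 2 - 1)

noncomputable def oneSubMulExp (u : ℝ) : ℝ :=
  (1 - u) * Real.exp u

lemma oneSubMulExp_zero : oneSubMulExp 0 = 1 := by
  simp [oneSubMulExp]

lemma continuous_oneSubMulExp : Continuous oneSubMulExp := by
  unfold oneSubMulExp
  fun_prop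

lemma hasDerivAt_oneSubMulExp (u : ℝ) : HasDerivAt oneSubMulExp (-u * Real.exp u) u := by
  have h := ((hasDerivAt_id u).const_sub 1).mul (Real.hasDerivAt_exp u)
  exact h.congr_deriv (by simp only [id]; ring)

lemma strictAntiOn_oneSubMulExp : StrictAntiOn oneSubMulExp (Ici 0) := by
  refine strictAntiOn_of_deriv_neg (convex_Ici 0) continuous_oneSubMulExp.continuousOn ?_
  intro u hu
  rw [interior_Ici, mem_Ioi] at hu
  rw [(hasDerivAt_oneSubMulExp u).deriv, neg_mul, neg_neg_iff_pos]
  exact mul_pos hu (Real.exp_pos u)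

noncomputable def h17Inner (x : ℝ) : ℝ :=
  (2 * Real.exp (-(1 : ℝ) / 2) * x + 1)⁻¹

lemma h17Inner_pos {x : ℝ} (hx : 0 ≤ x) : 0 < h17Inner x := by
  unfold h17Inner
  positivity

lemma strictAntiOn_h17Inner : StrictAntiOn h17Inner (Ici 0) := by
  intro x hx y _ hxy
  exact inv_strictAnti₀ (inv_pos.1 (h17Inner_pos hx)) (by gcongr)

lemma tendsto_h17Inner_atTop : Tendsto h17Inner atTop (𝓝 0) := by
  have hc : 0 < 2 * Real.exp (-(1 : ℝ) / 2) := by positivity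
  exact (tendsto_atTop_add_const_right _ 1
    (tendsto_id.const_mul_atTop hc)).inv_tendsto_atTop

lemma h17_eq_oneSubMulExp_h17Inner {x : ℝ} (hx : 0 ≤ x) :
    h17 x = oneSubMulExp (h17Inner x) := by
  unfold h17 h17Inner oneSubMulExp
  set c := Real.exp (-(1 : ℝ) / 2) with hc_def
  have hc : 0 < c := Real.exp_pos _
  have ht : 0 < 2 * c * x + 1 := by positivity
  have hexp : (1 - 2 / (2 * c * x + 3))⁻¹ / 2 - 1 = (2 * c * x + 1)⁻¹ + -(1 : ℝ) / 2 := by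
    have ht3 : 0 < 2 * c * x + 3 := by positivity
    have hbase : 1 - 2 / (2 * c * x + 3) = (2 * c * x + 1) / (2 * c * x + 3) := by
      field_simp
      ring
    rw [hbase, inv_div]
    field_simp
    ring
  have hfactor : 2 * x / (2 * c * x + 1) * c = 1 - (2 * c * x + 1)⁻¹ := by
    field_simp
    ring
  rw [hexp, Real.exp_add, ← hc_def, ← hfactor]
  ring

lemma strictMonoOn_h17 : StrictMonoOn h17 (Ici 0) := by
  intro x hx y hy hxy
  rw [h17_eq_oneSubMulExp_h17Inner hx, h17_eq_oneSubMulExp_h17Inner hy]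
  exact strictAntiOn_oneSubMulExp (h17Inner_pos hy).le (h17Inner_pos hx).le
    (strictAntiOn_h17Inner hx hy hxy)

/-- h is increasing on [1, ∞), tends to 1 at ∞, and consequently h(x) < 1 for x ≥ 1. -/
theorem stmt_17 :
    StrictMonoOn h17 (Set.Ici 1) ∧
    Filter.Tendsto h17 Filter.atTop (nhds 1) ∧
    ∀ x : ℝ, 1 ≤ x → h17 x < 1 := by
  refine ⟨strictMonoOn_h17.mono (Ici_subset_Ici.2 zero_le_one), ?_, ?_⟩
  · have hcomp : oneSubMulExp ∘ h17Inner =ᶠ[atTop] h17 :=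
      (eventually_ge_atTop 0).mono fun x hx => (h17_eq_oneSubMulExp_h17Inner hx).symm
    exact ((continuous_oneSubMulExp.tendsto' 0 1 oneSubMulExp_zero).comp
      tendsto_h17Inner_atTop).congr' hcomp
  · intro x hx
    have hx0 : (0 : ℝ) ≤ x := zero_le_one.trans hx
    rw [h17_eq_oneSubMulExp_h17Inner hx0, ← oneSubMulExp_zero]
    exact strictAntiOn_oneSubMulExp self_mem_Ici (h17Inner_pos hx0).le (h17Inner_pos hx0)
end
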